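/- arXiv:1404.6694 — 8 statements merged into one kernel-verified Lean document; each statement's English description precedes it below -/
import Mathlib

section
/- The nested resource allocation problem min Σ_{i=1}^n f_i(x_i) subject to Σ_{k=1}^{s[i]} x_k ≤ a_i for i = 1,...,m−1, Σ_{i=1}^n x_i = B, and 0 ≤ x_i ≤ d_i, with integer variables, admits a feasible solution if and only if Σ_{k=s[i-1]+1}^{n} d_k ≥ B − ā_{i-1} for every i in {1,...,m}, where ā is the tightened bound vector defined recursively by ā_0 = 0 and ā_i = min{ā_{i-1} + Σ_{k=s[i-1]+1}^{s[i]} d_k, a_i} for i < m, ā_m = B (assuming ā_{i-1} ≤ ā_i for all i). -/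
theorem stmt1 (n m : ℕ) (hm : 1 ≤ m) (s : ℕ → ℕ)
    (hs0 : s 0 = 0) (hsn : s m = n) (hsmono : StrictMono s)
    (a : ℕ → ℤ) (B : ℤ) (hB : 0 < B)
    (hapos : ∀ i, 1 ≤ i → i < m → 0 < a i)
    (hamono : ∀ i j, 1 ≤ i → i ≤ j → j < m → a i ≤ a j)
    (d : ℕ → ℤ) (hd : ∀ k, 0 < d k)
    (f : ℕ → ℤ → ℝ)
    (abar : ℕ → ℤ) (habar0 : abar 0 = 0) (habarm : abar m = B)
    (habar : ∀ i, 1 ≤ i → i < m →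
      abar i = min (abar (i - 1) + ∑ k ∈ Finset.Ioc (s (i - 1)) (s i), d k) (a i))
    (habarmono : ∀ i, 1 ≤ i → i ≤ m → abar (i - 1) ≤ abar i) :
    (∃ x : ℕ → ℤ,
        (∀ i, 1 ≤ i → i < m → ∑ k ∈ Finset.Icc 1 (s i), x k ≤ a i) ∧
        (∑ k ∈ Finset.Icc 1 n, x k = B) ∧
        (∀ k ∈ Finset.Icc 1 n, 0 ≤ x k ∧ x k ≤ d k)) ↔
      (∀ i, 1 ≤ i → i ≤ m →
        B - abar (i - 1) ≤ ∑ k ∈ Finset.Icc (s (i - 1) + 1) n, d k) := by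
  have hIcc : ∀ p b : ℕ, Finset.Icc (p + 1) b = Finset.Ioc p b := by
    intro p b; ext k; simp only [Finset.mem_Icc, Finset.mem_Ioc]; omega
  have hIcc1 : ∀ b : ℕ, Finset.Icc 1 b = Finset.Ioc 0 b := fun b => hIcc 0 b
  have hsle : ∀ j, j ≤ m → s j ≤ n := fun j hj => hsn ▸ hsmono.monotone hj
  constructor
  · rintro ⟨x, hx1, hx2, hx3⟩ i hi1 him
    have hxd : ∀ p q : ℕ, q ≤ n → ∑ k ∈ Finset.Ioc p q, x k ≤ ∑ k ∈ Finset.Ioc p q, d k := by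
      intro p q hq
      refine Finset.sum_le_sum fun k hk => ?_
      simp only [Finset.mem_Ioc] at hk
      exact (hx3 k (Finset.mem_Icc.mpr ⟨by omega, by omega⟩)).2
    have key : ∀ j, j < m → ∑ k ∈ Finset.Ioc 0 (s j), x k ≤ abar j := by
      intro j
      induction j with
      | zero => intro _; simp [hs0, habar0]
      | succ j ih =>
        intro hj
        have h1 : s j ≤ s (j + 1) := hsmono.monotone (by omega)
        have h2 : s (j + 1) ≤ n := hsle _ (by omega)
        have hsplit : ∑ k ∈ Finset.Ioc 0 (s j), x k + ∑ k ∈ Finset.Ioc (s j) (s (j + 1)), x k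
            = ∑ k ∈ Finset.Ioc 0 (s (j + 1)), x k :=
          Finset.sum_Ioc_consecutive x (Nat.zero_le _) h1
        have hub := habar (j + 1) (by omega) hj
        have hle1 : ∑ k ∈ Finset.Ioc 0 (s (j + 1)), x k
            ≤ abar j + ∑ k ∈ Finset.Ioc (s j) (s (j + 1)), d k := by
          rw [← hsplit]
          exact add_le_add (ih (by omega)) (hxd _ _ h2)
        have hle2 : ∑ k ∈ Finset.Ioc 0 (s (j + 1)), x k ≤ a (j + 1) := by
          rw [← hIcc1]; exact hx1 (j + 1) (by omega) hj
        rw [hub]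
        simp only [Nat.add_sub_cancel]
        exact le_min hle1 hle2
    have h1 : i - 1 < m := by omega
    have hsplit : ∑ k ∈ Finset.Ioc 0 (s (i - 1)), x k + ∑ k ∈ Finset.Ioc (s (i - 1)) n, x k
        = ∑ k ∈ Finset.Ioc 0 n, x k :=
      Finset.sum_Ioc_consecutive x (Nat.zero_le _) (hsle _ (by omega))
    have hxB : ∑ k ∈ Finset.Ioc 0 n, x k = B := by rw [← hIcc1]; exact hx2
    have hd1 := hxd (s (i - 1)) n le_rfl
    have hk1 := key (i - 1) h1
    rw [hIcc]
    omega
  · intro hyp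
    set blk : ℕ → ℕ := fun k => Nat.find (⟨m, Or.inr le_rfl⟩ : ∃ i, k ≤ s i ∨ m ≤ i) with hblkdef
    have hblk_all : ∀ k, (k ≤ s (blk k) ∨ m ≤ blk k)
        ∧ (∀ j, j < blk k → ¬(k ≤ s j ∨ m ≤ j)) ∧ blk k ≤ m := by
      intro k
      rw [hblkdef]
      simp only
      exact ⟨Nat.find_spec (⟨m, Or.inr le_rfl⟩ : ∃ i, k ≤ s i ∨ m ≤ i),
        fun j hj => Nat.find_min _ hj,
        Nat.find_le (Or.inr le_rfl)⟩
    clear hblkdef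
    clear_value blk
    have hblk_le : ∀ k, blk k ≤ m := fun k => (hblk_all k).2.2
    have hblk_spec : ∀ k, k ≤ n → k ≤ s (blk k) := by
      intro k hk
      rcases (hblk_all k).1 with h | h
      · exact h
      · have : blk k = m := le_antisymm (hblk_le k) h
        rw [this, hsn]; exact hk
    have hblk_pos : ∀ k, 1 ≤ k → k ≤ n → 1 ≤ blk k := by
      intro k hk1 hkn
      by_contra h
      have h0 : blk k = 0 := by omega
      have h2 := hblk_spec k hkn
      rw [h0, hs0] at h2
      omega
    have hblk_lt : ∀ k, 1 ≤ k → k ≤ n → s (blk k - 1) < k := by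
      intro k hk1 hkn
      have hpos := hblk_pos k hk1 hkn
      have hmin := (hblk_all k).2.1 (blk k - 1) (by omega)
      push_neg at hmin
      exact hmin.1
    have hblk_eq : ∀ i, 1 ≤ i → i ≤ m → ∀ k, s (i - 1) < k → k ≤ s i → blk k = i := by
      intro i hi1 him k hlo hhi
      have hub : blk k ≤ i := by
        by_contra h
        push_neg at h
        exact (hblk_all k).2.1 i h (Or.inl hhi)
      have hlb : i ≤ blk k := by
        by_contra h
        push_neg at h
        rcases (hblk_all k).1 with hsp | hsp
        · have : s (blk k) ≤ s (i - 1) := hsmono.monotone (by omega)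
          omega
        · omega
      omega
    set g : ℕ → ℤ := fun k =>
      min (abar (blk k)) (abar (blk k - 1) + ∑ j ∈ Finset.Ioc (s (blk k - 1)) k, d j)
      with hgdef
    have hg0 : g 0 = 0 := by
      have hb0 : blk 0 = 0 := by
        by_contra h
        exact (hblk_all 0).2.1 0 (by omega) (Or.inl (by omega))
      simp [hgdef, hb0, hs0, habar0]
    have hg_s : ∀ j, 1 ≤ j → j ≤ m → g (s j) = abar j := by
      intro j hj1 hjm
      have hb : blk (s j) = j :=
        hblk_eq j hj1 hjm (s j) (hsmono (by omega)) le_rfl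
      have hle : abar j ≤ abar (j - 1) + ∑ i ∈ Finset.Ioc (s (j - 1)) (s j), d i := by
        by_cases h : j < m
        · rw [habar j hj1 h]; exact min_le_left _ _
        · have hjem : j = m := by omega
          have h2 := hyp m hm le_rfl
          rw [hIcc] at h2
          rw [hjem, habarm, hsn]
          omega
      simp only [hgdef, hb]
      exact min_eq_left hle
    have hstep : ∀ k, 1 ≤ k → k ≤ n → 0 ≤ g k - g (k - 1) ∧ g k - g (k - 1) ≤ d k := by
      intro k hk1 hkn
      have hble := hblk_le k
      have hbpos := hblk_pos k hk1 hkn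
      have hblt := hblk_lt k hk1 hkn
      have hbsp := hblk_spec k hkn
      by_cases hc : s (blk k - 1) = k - 1
      · -- k is the first element of its block
        have hgk1 : g (k - 1) = abar (blk k - 1) := by
          rcases Nat.eq_zero_or_pos (blk k - 1) with h0 | hpos
          · rw [← hc, h0, hs0, hg0, habar0]
          · rw [← hc]; exact hg_s (blk k - 1) hpos (by omega)
        have hsingle : Finset.Ioc (s (blk k - 1)) k = {k} := by
          ext j; simp only [Finset.mem_Ioc, Finset.mem_singleton]; omega
        have hgk : g k = min (abar (blk k)) (abar (blk k - 1) + d k) := by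
          simp [hgdef, hsingle]
        have hmono := habarmono (blk k) hbpos hble
        have hdk := hd k
        rw [hgk, hgk1]
        constructor
        · have : abar (blk k - 1) ≤ min (abar (blk k)) (abar (blk k - 1) + d k) :=
            le_min hmono (by linarith)
          linarith
        · have : min (abar (blk k)) (abar (blk k - 1) + d k) ≤ abar (blk k - 1) + d k :=
            min_le_right _ _
          linarith
      · -- k-1 is in the same block as k
        have hlt' : s (blk k - 1) < k - 1 := by omega
        have hb' : blk (k - 1) = blk k :=
          hblk_eq (blk k) hbpos hble (k - 1) hlt' (by omega)
        have hsum := Finset.sum_Ioc_succ_top (by omega : s (blk k - 1) ≤ k - 1) d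
        rw [show k - 1 + 1 = k from by omega] at hsum
        have hgk1 : g (k - 1) = min (abar (blk k))
            (abar (blk k - 1) + ∑ j ∈ Finset.Ioc (s (blk k - 1)) (k - 1), d j) := by
          simp [hgdef, hb']
        have hgk : g k = min (abar (blk k))
            (abar (blk k - 1) + (∑ j ∈ Finset.Ioc (s (blk k - 1)) (k - 1), d j + d k)) := by
          rw [hgdef]
          simp only
          rw [hsum]
        set A := abar (blk k) with hA
        set C := abar (blk k - 1) + ∑ j ∈ Finset.Ioc (s (blk k - 1)) (k - 1), d j with hC
        have hCk : abar (blk k - 1)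
            + (∑ j ∈ Finset.Ioc (s (blk k - 1)) (k - 1), d j + d k) = C + d k := by
          rw [hC]; ring
        rw [hgk, hgk1, hCk]
        have hdk := hd k
        constructor
        · have : min A C ≤ min A (C + d k) := min_le_min le_rfl (by linarith)
          linarith
        · have h1 : min A (C + d k) ≤ min (A + d k) (C + d k) :=
            min_le_min (by linarith) le_rfl
          have h2 : min (A + d k) (C + d k) = min A C + d k := min_add_add_right A C (d k)
          linarith
    have htel : ∀ K : ℕ, ∑ k ∈ Finset.Icc 1 K, (g k - g (k - 1)) = g K := by
      intro K
      induction K with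
      | zero => simp [hg0]
      | succ K ih =>
        rw [Finset.sum_Icc_succ_top (by omega), ih]
        simp
    refine ⟨fun k => g k - g (k - 1), ?_, ?_, ?_⟩
    · intro i hi1 him
      show ∑ k ∈ Finset.Icc 1 (s i), (g k - g (k - 1)) ≤ a i
      rw [htel, hg_s i hi1 (le_of_lt him), habar i hi1 him]
      exact min_le_right _ _
    · show ∑ k ∈ Finset.Icc 1 n, (g k - g (k - 1)) = B
      rw [htel, ← hsn, hg_s m hm le_rfl]
      exact habarm
    · intro k hk
      rw [Finset.mem_Icc] at hk
      exact hstep k hk.1 hk.2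
end

section
/- Let f_1,...,f_n : ℤ → ℝ be convex functions on [0, d_i] and let x* be an optimal integer solution of min Σ f_i(x_i) subject to Σ x_i = A and 0 ≤ x_i ≤ d_i. For the perturbed functions f̄_i(x) = f_i(x) + (ξ/(B+1))·max{x − x*_i, 0}, where ξ > 0 is strictly less than the gap between the optimal value and the second-best objective value (or ξ = 1 if all feasible solutions are optimal), and B ≥ A, the perturbed problem admits x* as its unique optimal solution. -/
theorem stmt2 (n : ℕ) (d : Fin n → ℤ) (hd : ∀ i, 0 ≤ d i)
    (f : Fin n → ℤ → ℝ)
    (hconv : ∀ i x, 1 ≤ x → x + 1 ≤ d i → 2 * f i x ≤ f i (x - 1) + f i (x + 1))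
    (A B : ℤ) (hAB : A ≤ B)
    (xs : Fin n → ℤ)
    (hxsum : ∑ i, xs i = A) (hxbox : ∀ i, 0 ≤ xs i ∧ xs i ≤ d i)
    (hopt : ∀ y : Fin n → ℤ, (∑ i, y i = A) → (∀ i, 0 ≤ y i ∧ y i ≤ d i) →
      ∑ i, f i (xs i) ≤ ∑ i, f i (y i))
    (ξ : ℝ) (hξpos : 0 < ξ)
    (hgap :
      ((∀ y : Fin n → ℤ, (∑ i, y i = A) → (∀ i, 0 ≤ y i ∧ y i ≤ d i) →
          ∑ i, f i (y i) = ∑ i, f i (xs i)) ∧ ξ = 1) ∨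
      (∀ y : Fin n → ℤ, (∑ i, y i = A) → (∀ i, 0 ≤ y i ∧ y i ≤ d i) →
          ∑ i, f i (y i) ≠ ∑ i, f i (xs i) →
          ∑ i, f i (xs i) + ξ < ∑ i, f i (y i))) :
    ∀ y : Fin n → ℤ, (∑ i, y i = A) → (∀ i, 0 ≤ y i ∧ y i ≤ d i) → y ≠ xs →
      ∑ i, (f i (xs i) + ξ / ((B : ℝ) + 1) * max ((xs i : ℝ) - (xs i : ℝ)) 0) <
      ∑ i, (f i (y i) + ξ / ((B : ℝ) + 1) * max ((y i : ℝ) - (xs i : ℝ)) 0) := by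
  intro y hysum hybox hyne
  have hA0 : 0 ≤ A := hxsum ▸ Finset.sum_nonneg (fun i _ => (hxbox i).1)
  have hB1 : (0 : ℝ) < (B : ℝ) + 1 := by
    have : (0:ℤ) ≤ B := le_trans hA0 hAB
    have : (0:ℝ) ≤ (B:ℝ) := by exact_mod_cast this
    linarith
  have hc : 0 < ξ / ((B : ℝ) + 1) := div_pos hξpos hB1
  -- some coordinate increases
  have hex : ∃ i, xs i < y i := by
    by_contra h
    push_neg at h
    obtain ⟨j, hj⟩ : ∃ j, y j ≠ xs j := Function.ne_iff.mp hyne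
    have hlt : ∑ i, y i < ∑ i, xs i :=
      Finset.sum_lt_sum (fun i _ => h i) ⟨j, Finset.mem_univ j, lt_of_le_of_ne (h j) hj⟩
    rw [hxsum, hysum] at hlt; exact lt_irrefl _ hlt
  obtain ⟨j, hj⟩ := hex
  -- penalty sum is positive
  have hpen : 0 < ∑ i, ξ / ((B : ℝ) + 1) * max ((y i : ℝ) - (xs i : ℝ)) 0 := by
    refine Finset.sum_pos' (fun i _ => ?_) ⟨j, Finset.mem_univ j, ?_⟩
    · exact mul_nonneg hc.le (le_max_right _ _)
    · refine mul_pos hc (lt_max_iff.mpr (Or.inl ?_))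
      have : (xs j : ℝ) < (y j : ℝ) := by exact_mod_cast hj
      linarith
  have hL : ∑ i, (f i (xs i) + ξ / ((B : ℝ) + 1) * max ((xs i : ℝ) - (xs i : ℝ)) 0)
      = ∑ i, f i (xs i) := by
    apply Finset.sum_congr rfl
    intro i _
    simp
  have hR : ∑ i, (f i (y i) + ξ / ((B : ℝ) + 1) * max ((y i : ℝ) - (xs i : ℝ)) 0)
      = ∑ i, f i (y i) + ∑ i, ξ / ((B : ℝ) + 1) * max ((y i : ℝ) - (xs i : ℝ)) 0 :=
    Finset.sum_add_distrib
  rw [hL, hR]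
  by_cases heq : ∑ i, f i (y i) = ∑ i, f i (xs i)
  · rw [heq]; linarith
  · have := hopt y hysum hybox
    have : ∑ i, f i (xs i) < ∑ i, f i (y i) := lt_of_le_of_ne this (Ne.symm heq)
    linarith
end

section
/- Let x↓ be an optimal integer solution of NESTED(v,t) (variables indexed s[v-1]+1 through s[t], total sum ā_t − ā_{v-1}) and let x↑ be an optimal integer solution of NESTED(t+1,w) (variables indexed s[t]+1 through s[w], total sum ā_w − ā_t). Then the combined problem NESTED(v,w) (total sum ā_w − ā_{v-1}, with the nested constraint Σ_{k≤s[t]} x_k ≤ ā_t − ā_{v-1} and all intermediate nested constraints) admits an optimal integer solution x** satisfying x**_i ≤ x↓_i for all i ≤ s[t] and x**_i ≥ x↑_i for all i > s[t]. -/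
/-- Feasibility for the integer problem NESTED(v,w): variables indexed
`s[v-1]+1 .. s[w]`, nested prefix constraints for `i = v,…,w-1`, total sum
`ā_w - ā_{v-1}`, and box constraints `0 ≤ x_k ≤ d_k`. -/
def NestedFeasible (s : ℕ → ℕ) (abar : ℕ → ℤ) (d : ℕ → ℤ) (v w : ℕ)
    (x : ℕ → ℤ) : Prop :=
  (∀ i, v ≤ i → i < w →
      ∑ k ∈ Finset.Ioc (s (v - 1)) (s i), x k ≤ abar i - abar (v - 1)) ∧
  (∑ k ∈ Finset.Ioc (s (v - 1)) (s w), x k = abar w - abar (v - 1)) ∧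
  (∀ k ∈ Finset.Ioc (s (v - 1)) (s w), 0 ≤ x k ∧ x k ≤ d k)

/-- Objective of NESTED(v,w). -/
def NestedObj (s : ℕ → ℕ) (f : ℕ → ℤ → ℝ) (v w : ℕ) (x : ℕ → ℤ) : ℝ :=
  ∑ i ∈ Finset.Ioc (s (v - 1)) (s w), f i (x i)

/-- Optimality for NESTED(v,w). -/
def NestedOptimal (s : ℕ → ℕ) (abar : ℕ → ℤ) (d : ℕ → ℤ) (f : ℕ → ℤ → ℝ)
    (v w : ℕ) (x : ℕ → ℤ) : Prop :=
  NestedFeasible s abar d v w x ∧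
  ∀ y, NestedFeasible s abar d v w y → NestedObj s f v w x ≤ NestedObj s f v w y

namespace StmtAux

def mv (i j : ℕ) (x : ℕ → ℤ) : ℕ → ℤ :=
  fun k => x k + (if k = j then 1 else 0) - (if k = i then 1 else 0)

lemma mv_apply_i {i j : ℕ} (hij : i ≠ j) (x : ℕ → ℤ) : mv i j x i = x i - 1 := by
  simp [mv, hij]

lemma mv_apply_j {i j : ℕ} (hij : i ≠ j) (x : ℕ → ℤ) : mv i j x j = x j + 1 := by
  simp [mv, Ne.symm hij]

lemma mv_apply_other {i j k : ℕ} (hki : k ≠ i) (hkj : k ≠ j) (x : ℕ → ℤ) :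
    mv i j x k = x k := by
  simp [mv, hki, hkj]

lemma mv_sum {i j : ℕ} (hij : i ≠ j) (x : ℕ → ℤ) (F : Finset ℕ) :
    ∑ k ∈ F, mv i j x k
      = (∑ k ∈ F, x k) + (if j ∈ F then 1 else 0) - (if i ∈ F then 1 else 0) := by
  simp [mv, Finset.sum_add_distrib, Finset.sum_sub_distrib, Finset.sum_ite_eq']

lemma sum_pair {M : Type*} [AddCommMonoid M] {F : Finset ℕ} {i j : ℕ}
    (hi : i ∈ F) (hj : j ∈ F) (hij : i ≠ j) (g : ℕ → M) :
    ∑ k ∈ F, g k = g i + g j + ∑ k ∈ (F.erase i).erase j, g k := by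
  have hj' : j ∈ F.erase i := Finset.mem_erase.mpr ⟨Ne.symm hij, hj⟩
  rw [← Finset.add_sum_erase F g hi, ← Finset.add_sum_erase _ g hj', add_assoc]

lemma obj_mv {F : Finset ℕ} {i j : ℕ} (hi : i ∈ F) (hj : j ∈ F) (hij : i ≠ j)
    (f : ℕ → ℤ → ℝ) (x : ℕ → ℤ) :
    ∑ k ∈ F, f k (mv i j x k)
      = (∑ k ∈ F, f k (x k)) + (f i (x i - 1) - f i (x i)) + (f j (x j + 1) - f j (x j)) := by
  rw [sum_pair hi hj hij (fun k => f k (mv i j x k)), sum_pair hi hj hij (fun k => f k (x k)),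
    mv_apply_i hij, mv_apply_j hij]
  have : ∑ k ∈ (F.erase i).erase j, f k (mv i j x k)
      = ∑ k ∈ (F.erase i).erase j, f k (x k) := by
    refine Finset.sum_congr rfl fun k hk => ?_
    have hkj : k ≠ j := (Finset.mem_erase.mp hk).1
    have hki : k ≠ i := (Finset.mem_erase.mp (Finset.mem_erase.mp hk).2).1
    rw [mv_apply_other hki hkj]
  rw [this]; ring

lemma convex_diff {d : ℕ → ℤ} {f : ℕ → ℤ → ℝ}
    (hconv : ∀ i x, 1 ≤ x → x + 1 ≤ d i → 2 * f i x ≤ f i (x - 1) + f i (x + 1))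
    (i : ℕ) (p q : ℤ) (hp : 0 ≤ p) (hpq : p ≤ q) (hq : q + 1 ≤ d i) :
    f i (p + 1) - f i p ≤ f i (q + 1) - f i q := by
  have key : ∀ n : ℕ, ∀ q : ℤ, q = p + n → q + 1 ≤ d i →
      f i (p + 1) - f i p ≤ f i (q + 1) - f i q := by
    intro n
    induction n with
    | zero => intro q hq0 _; simp at hq0; subst hq0; exact le_refl _
    | succ n ih =>
      intro q hq0 hqd
      have h1 : f i (p + 1) - f i p ≤ f i (q - 1 + 1) - f i (q - 1) := by
        refine ih (q - 1) ?_ ?_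
        · push_cast at hq0 ⊢; omega
        · omega
      have h2 := hconv i q (by push_cast at hq0; omega) hqd
      have he : q - 1 + 1 = q := by ring
      rw [he] at h1
      linarith
  have hqn : q = p + ((q - p).toNat : ℤ) := by omega
  exact key _ q hqn hq

lemma exchange_obj_le {d : ℕ → ℤ} {f : ℕ → ℤ → ℝ}
    (hconv : ∀ i x, 1 ≤ x → x + 1 ≤ d i → 2 * f i x ≤ f i (x - 1) + f i (x + 1))
    (z x : ℕ → ℤ) (i j : ℕ)
    (h1 : z i < x i) (h2 : x j < z j) (h3 : 0 ≤ z i) (h4 : x i ≤ d i)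
    (h5 : 0 ≤ x j) (h6 : z j ≤ d j)
    (hexch : f i (z i) + f j (z j) ≤ f i (z i + 1) + f j (z j - 1)) :
    f i (x i - 1) + f j (x j + 1) ≤ f i (x i) + f j (x j) := by
  have c1 : f i (z i + 1) - f i (z i) ≤ f i (x i - 1 + 1) - f i (x i - 1) :=
    convex_diff hconv i (z i) (x i - 1) h3 (by omega) (by omega)
  have c2 : f j (x j + 1) - f j (x j) ≤ f j (z j - 1 + 1) - f j (z j - 1) :=
    convex_diff hconv j (x j) (z j - 1) h5 (by omega) (by omega)
  have e1 : x i - 1 + 1 = x i := by ring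
  have e2 : z j - 1 + 1 = z j := by ring
  rw [e1] at c1; rw [e2] at c2
  linarith

lemma exists_flip (F : Finset ℕ) (g h : ℕ → ℤ) (i : ℕ) (hi : i ∈ F) (hlt : g i < h i)
    (hsum : ∑ k ∈ F, h k ≤ ∑ k ∈ F, g k) : ∃ j ∈ F, h j < g j := by
  by_contra hc
  push_neg at hc
  have : ∑ k ∈ F, g k < ∑ k ∈ F, h k :=
    Finset.sum_lt_sum hc ⟨i, hi, hlt⟩
  linarith

lemma mv_feasible (s : ℕ → ℕ) (abar : ℕ → ℤ) (d : ℕ → ℤ) (α β : ℕ)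
    (x : ℕ → ℤ) (hx : NestedFeasible s abar d α β x) (i j : ℕ)
    (hi : i ∈ Finset.Ioc (s (α - 1)) (s β)) (hj : j ∈ Finset.Ioc (s (α - 1)) (s β))
    (hij : i ≠ j) (hxi : 1 ≤ x i) (hxj : x j + 1 ≤ d j)
    (hslack : ∀ m, α ≤ m → m < β → j ∈ Finset.Ioc (s (α - 1)) (s m) →
      i ∈ Finset.Ioc (s (α - 1)) (s m) ∨
        (∑ k ∈ Finset.Ioc (s (α - 1)) (s m), x k) + 1 ≤ abar m - abar (α - 1)) :
    NestedFeasible s abar d α β (mv i j x) := by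
  obtain ⟨hpre, htot, hbox⟩ := hx
  refine ⟨?_, ?_, ?_⟩
  · intro m hm1 hm2
    rw [mv_sum hij]
    by_cases hjm : j ∈ Finset.Ioc (s (α - 1)) (s m)
    · by_cases him : i ∈ Finset.Ioc (s (α - 1)) (s m)
      · rw [if_pos hjm, if_pos him]
        have := hpre m hm1 hm2; omega
      · rcases hslack m hm1 hm2 hjm with h | h
        · exact absurd h him
        · rw [if_pos hjm, if_neg him]; omega
    · rw [if_neg hjm]
      have := hpre m hm1 hm2
      by_cases him : i ∈ Finset.Ioc (s (α - 1)) (s m) <;> simp [him] <;> omega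
  · rw [mv_sum hij, if_pos hj, if_pos hi, htot]; ring
  · intro k hk
    have hb := hbox k hk
    by_cases hki : k = i
    · subst hki
      rw [mv_apply_i hij]
      exact ⟨by omega, by omega⟩
    · by_cases hkj : k = j
      · subst hkj
        rw [mv_apply_j hij]
        exact ⟨by omega, hxj⟩
      · rw [mv_apply_other hki hkj]; exact hb

lemma opt_exchange (s : ℕ → ℕ) (abar : ℕ → ℤ) (d : ℕ → ℤ) (f : ℕ → ℤ → ℝ) (α β : ℕ)
    (z : ℕ → ℤ) (hz : NestedOptimal s abar d f α β z) (i j : ℕ)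
    (hi : i ∈ Finset.Ioc (s (α - 1)) (s β)) (hj : j ∈ Finset.Ioc (s (α - 1)) (s β))
    (hij : i ≠ j) (hfe : NestedFeasible s abar d α β (mv i j z)) :
    f i (z i) + f j (z j) ≤ f i (z i - 1) + f j (z j + 1) := by
  have h := hz.2 _ hfe
  unfold NestedObj at h
  rw [obj_mv hi hj hij f z] at h
  linarith


lemma lemA (s : ℕ → ℕ) (hsmono : StrictMono s)
    (abar : ℕ → ℤ) (d : ℕ → ℤ) (f : ℕ → ℤ → ℝ)
    (hconv : ∀ i x, 1 ≤ x → x + 1 ≤ d i → 2 * f i x ≤ f i (x - 1) + f i (x + 1))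
    (v t w : ℕ) (hv : 1 ≤ v) (hvt : v ≤ t) (htw : t < w)
    (xdown : ℕ → ℤ) (hdown : NestedOptimal s abar d f v t xdown)
    (x : ℕ → ℤ) (hx : NestedFeasible s abar d v w x) :
    ∀ n : ℕ, ∀ i j : ℕ, i + j ≤ n →
      i ∈ Finset.Ioc (s (v - 1)) (s t) → j ∈ Finset.Ioc (s (v - 1)) (s t) →
      xdown i < x i → x j < xdown j →
      ∃ i' j', i' ∈ Finset.Ioc (s (v - 1)) (s t) ∧ j' ∈ Finset.Ioc (s (v - 1)) (s t) ∧
        i' ≠ j' ∧ xdown i' < x i' ∧ x j' < xdown j' ∧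
        NestedFeasible s abar d v w (mv i' j' x) ∧
        NestedObj s f v w (mv i' j' x) ≤ NestedObj s f v w x := by
  have hstw : s t ≤ s w := le_of_lt (hsmono htw)
  have hAW : Finset.Ioc (s (v - 1)) (s t) ⊆ Finset.Ioc (s (v - 1)) (s w) :=
    Finset.Ioc_subset_Ioc_right hstw
  intro n
  induction n with
  | zero =>
    intro i j hn hiA _ _ _
    have := (Finset.mem_Ioc.mp hiA).1
    omega
  | succ n ih =>
    intro i j hn hiA hjA hsur hdef
    have hij : i ≠ j := by rintro rfl; omega
    obtain ⟨hia, hit⟩ := Finset.mem_Ioc.mp hiA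
    obtain ⟨hja, hjt⟩ := Finset.mem_Ioc.mp hjA
    have hbxi := hx.2.2 i (hAW hiA)
    have hbxj := hx.2.2 j (hAW hjA)
    have hbdi := hdown.1.2.2 i hiA
    have hbdj := hdown.1.2.2 j hjA
    -- the three-inequality objective bound, given a feasible exchange at xdown
    have mkobj : NestedFeasible s abar d v t (mv j i xdown) →
        NestedObj s f v w (mv i j x) ≤ NestedObj s f v w x := by
      intro hfd
      have hex := opt_exchange s abar d f v t xdown hdown j i hjA hiA (Ne.symm hij) hfd
      have hobj := exchange_obj_le hconv xdown x i j hsur hdef hbdi.1 hbxi.2 hbxj.1 hbdj.2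
        (by linarith)
      unfold NestedObj
      rw [obj_mv (hAW hiA) (hAW hjA) hij f x]
      linarith
    rcases lt_or_gt_of_ne hij with hlt | hgt
    · -- i < j
      by_cases hC : ∀ m, v ≤ m → m < t → i ∈ Finset.Ioc (s (v - 1)) (s m) →
          j ∈ Finset.Ioc (s (v - 1)) (s m) ∨
            (∑ k ∈ Finset.Ioc (s (v - 1)) (s m), xdown k) + 1 ≤ abar m - abar (v - 1)
      · have hfd : NestedFeasible s abar d v t (mv j i xdown) :=
          mv_feasible s abar d v t xdown hdown.1 j i hjA hiA (Ne.symm hij)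
            (by omega) (by omega) hC
        have hfx : NestedFeasible s abar d v w (mv i j x) := by
          refine mv_feasible s abar d v w x hx i j (hAW hiA) (hAW hjA) hij
            (by omega) (by omega) ?_
          intro m _ _ hjm
          left
          obtain ⟨_, hjsm⟩ := Finset.mem_Ioc.mp hjm
          exact Finset.mem_Ioc.mpr ⟨hia, by omega⟩
        exact ⟨i, j, hiA, hjA, hij, hsur, hdef, hfx, mkobj hfd⟩
      · push_neg at hC
        obtain ⟨m, hm1, hm2, him, hjm, hns⟩ := hC
        have htight : ∑ k ∈ Finset.Ioc (s (v - 1)) (s m), xdown k = abar m - abar (v - 1) := by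
          have := hdown.1.1 m hm1 hm2; omega
        have hxle : ∑ k ∈ Finset.Ioc (s (v - 1)) (s m), x k ≤ abar m - abar (v - 1) :=
          hx.1 m hm1 (by omega)
        obtain ⟨j', hj'pre, hj'def⟩ :=
          exists_flip (Finset.Ioc (s (v - 1)) (s m)) xdown x i him hsur (by omega)
        have hj'A : j' ∈ Finset.Ioc (s (v - 1)) (s t) :=
          Finset.Ioc_subset_Ioc_right (le_of_lt (hsmono hm2)) hj'pre
        have hj'sm : j' ≤ s m := (Finset.mem_Ioc.mp hj'pre).2
        have hjgt : s m < j := by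
          by_contra hcon
          exact hjm (Finset.mem_Ioc.mpr ⟨hja, by omega⟩)
        exact ih i j' (by omega) hiA hj'A hsur hj'def
    · -- j < i
      by_cases hC : ∀ m, v ≤ m → m < w → j ∈ Finset.Ioc (s (v - 1)) (s m) →
          i ∈ Finset.Ioc (s (v - 1)) (s m) ∨
            (∑ k ∈ Finset.Ioc (s (v - 1)) (s m), x k) + 1 ≤ abar m - abar (v - 1)
      · have hfx : NestedFeasible s abar d v w (mv i j x) :=
          mv_feasible s abar d v w x hx i j (hAW hiA) (hAW hjA) hij
            (by omega) (by omega) hC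
        have hfd : NestedFeasible s abar d v t (mv j i xdown) := by
          refine mv_feasible s abar d v t xdown hdown.1 j i hjA hiA (Ne.symm hij)
            (by omega) (by omega) ?_
          intro m _ _ him
          left
          obtain ⟨_, hism⟩ := Finset.mem_Ioc.mp him
          exact Finset.mem_Ioc.mpr ⟨hja, by omega⟩
        exact ⟨i, j, hiA, hjA, hij, hsur, hdef, hfx, mkobj hfd⟩
      · push_neg at hC
        obtain ⟨m, hm1, hm2, hjm, him, hns⟩ := hC
        have hxle := hx.1 m hm1 hm2
        have htight : ∑ k ∈ Finset.Ioc (s (v - 1)) (s m), x k = abar m - abar (v - 1) := by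
          omega
        have higt : s m < i := by
          by_contra hcon
          exact him (Finset.mem_Ioc.mpr ⟨hia, by omega⟩)
        have hmt : m < t := by
          have : s m < s t := by omega
          exact hsmono.lt_iff_lt.mp this
        have hdle : ∑ k ∈ Finset.Ioc (s (v - 1)) (s m), xdown k ≤ abar m - abar (v - 1) :=
          hdown.1.1 m hm1 hmt
        obtain ⟨i', hi'pre, hi'sur⟩ :=
          exists_flip (Finset.Ioc (s (v - 1)) (s m)) x xdown j hjm hdef (by omega)
        have hi'A : i' ∈ Finset.Ioc (s (v - 1)) (s t) :=
          Finset.Ioc_subset_Ioc_right (le_of_lt (hsmono hmt)) hi'pre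
        have hi'sm : i' ≤ s m := (Finset.mem_Ioc.mp hi'pre).2
        exact ih i' j (by omega) hi'A hjA hi'sur hdef


lemma lemB (s : ℕ → ℕ) (hsmono : StrictMono s)
    (abar : ℕ → ℤ) (d : ℕ → ℤ) (f : ℕ → ℤ → ℝ)
    (hconv : ∀ i x, 1 ≤ x → x + 1 ≤ d i → 2 * f i x ≤ f i (x - 1) + f i (x + 1))
    (v t w : ℕ) (hv : 1 ≤ v) (hvt : v ≤ t) (htw : t < w)
    (xup : ℕ → ℤ) (hup : NestedOptimal s abar d f (t + 1) w xup)
    (x : ℕ → ℤ) (hx : NestedFeasible s abar d v w x) :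
    ∀ n : ℕ, ∀ i j : ℕ, (s w - i) + (s w - j) ≤ n →
      i ∈ Finset.Ioc (s t) (s w) → j ∈ Finset.Ioc (s t) (s w) →
      x i < xup i → xup j < x j →
      ∃ i' j', i' ∈ Finset.Ioc (s t) (s w) ∧ j' ∈ Finset.Ioc (s t) (s w) ∧
        i' ≠ j' ∧ x i' < xup i' ∧ xup j' < x j' ∧
        NestedFeasible s abar d v w (mv j' i' x) ∧
        NestedObj s f v w (mv j' i' x) ≤ NestedObj s f v w x := by
  have hvt1 : v - 1 < t := by omega
  have hat : s (v - 1) < s t := hsmono hvt1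
  have hBW : Finset.Ioc (s t) (s w) ⊆ Finset.Ioc (s (v - 1)) (s w) :=
    Finset.Ioc_subset_Ioc (le_of_lt hat) le_rfl
  have ht1 : t + 1 - 1 = t := rfl
  have hupfe : NestedFeasible s abar d (t + 1) w xup := hup.1
  intro n
  induction n with
  | zero =>
    intro i j hn hiB hjB hdef hsur
    obtain ⟨_, hisw⟩ := Finset.mem_Ioc.mp hiB
    obtain ⟨_, hjsw⟩ := Finset.mem_Ioc.mp hjB
    have : i = j := by omega
    subst this
    linarith
  | succ n ih =>
    intro i j hn hiB hjB hdef hsur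
    have hij : i ≠ j := by rintro rfl; linarith
    obtain ⟨hit, hisw⟩ := Finset.mem_Ioc.mp hiB
    obtain ⟨hjt, hjsw⟩ := Finset.mem_Ioc.mp hjB
    have hbxi := hx.2.2 i (hBW hiB)
    have hbxj := hx.2.2 j (hBW hjB)
    have hbui := hupfe.2.2 i hiB
    have hbuj := hupfe.2.2 j hjB
    have mkobj : NestedFeasible s abar d (t + 1) w (mv i j xup) →
        NestedObj s f v w (mv j i x) ≤ NestedObj s f v w x := by
      intro hfu
      have hex := opt_exchange s abar d f (t + 1) w xup hup i j hiB hjB hij hfu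
      have hobj := exchange_obj_le hconv xup x j i hsur hdef hbuj.1 hbxj.2 hbxi.1 hbui.2
        (by linarith)
      unfold NestedObj
      rw [obj_mv (hBW hjB) (hBW hiB) (Ne.symm hij) f x]
      linarith
    rcases lt_or_gt_of_ne hij with hlt | hgt
    · -- i < j : x-move is the unsafe one
      by_cases hC : ∀ m, v ≤ m → m < w → i ∈ Finset.Ioc (s (v - 1)) (s m) →
          j ∈ Finset.Ioc (s (v - 1)) (s m) ∨
            (∑ k ∈ Finset.Ioc (s (v - 1)) (s m), x k) + 1 ≤ abar m - abar (v - 1)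
      · have hfu : NestedFeasible s abar d (t + 1) w (mv i j xup) := by
          refine mv_feasible s abar d (t + 1) w xup hupfe i j hiB hjB hij
            (by omega) (by omega) ?_
          intro m _ _ hjm
          left
          obtain ⟨_, hjsm⟩ := Finset.mem_Ioc.mp hjm
          exact Finset.mem_Ioc.mpr ⟨hit, by omega⟩
        have hfx : NestedFeasible s abar d v w (mv j i x) :=
          mv_feasible s abar d v w x hx j i (hBW hjB) (hBW hiB) (Ne.symm hij)
            (by omega) (by omega) hC
        exact ⟨i, j, hiB, hjB, hij, hdef, hsur, hfx, mkobj hfu⟩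
      · push_neg at hC
        obtain ⟨m, hm1, hm2, him, hjm, hns⟩ := hC
        obtain ⟨_, hism⟩ := Finset.mem_Ioc.mp him
        have hxle := hx.1 m hm1 hm2
        have hjgt : s m < j := by
          by_contra hcon
          exact hjm (Finset.mem_Ioc.mpr ⟨by omega, by omega⟩)
        have htm : t < m := hsmono.lt_iff_lt.mp (by omega)
        have hv1m : s (v - 1) ≤ s m := le_of_lt (hsmono (by omega))
        have hsmw : s m ≤ s w := le_of_lt (hsmono hm2)
        have hstm : s t ≤ s m := le_of_lt (hsmono htm)
        have hsplx : (∑ k ∈ Finset.Ioc (s (v - 1)) (s m), x k)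
            + ∑ k ∈ Finset.Ioc (s m) (s w), x k
            = ∑ k ∈ Finset.Ioc (s (v - 1)) (s w), x k :=
          Finset.sum_Ioc_consecutive _ hv1m hsmw
        have hsplu : (∑ k ∈ Finset.Ioc (s t) (s m), xup k)
            + ∑ k ∈ Finset.Ioc (s m) (s w), xup k
            = ∑ k ∈ Finset.Ioc (s t) (s w), xup k :=
          Finset.sum_Ioc_consecutive _ hstm hsmw
        have htotx := hx.2.1
        have htotu := hupfe.2.1
        have hprem := hupfe.1 m (by omega) hm2
        simp only [Nat.add_sub_cancel] at htotu hprem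
        obtain ⟨i', hi'F, hi'def⟩ :=
          exists_flip (Finset.Ioc (s m) (s w)) xup x j
            (Finset.mem_Ioc.mpr ⟨hjgt, hjsw⟩) hsur (by omega)
        obtain ⟨hi'm, hi'sw⟩ := Finset.mem_Ioc.mp hi'F
        have hi'B : i' ∈ Finset.Ioc (s t) (s w) := Finset.mem_Ioc.mpr ⟨by omega, hi'sw⟩
        exact ih i' j (by omega) hi'B hjB hi'def hsur
    · -- j < i : xup-move is the unsafe one
      by_cases hC : ∀ m, t + 1 ≤ m → m < w → j ∈ Finset.Ioc (s t) (s m) →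
          i ∈ Finset.Ioc (s t) (s m) ∨
            (∑ k ∈ Finset.Ioc (s t) (s m), xup k) + 1 ≤ abar m - abar t
      · have hfu : NestedFeasible s abar d (t + 1) w (mv i j xup) :=
          mv_feasible s abar d (t + 1) w xup hupfe i j hiB hjB hij
            (by omega) (by omega) hC
        have hfx : NestedFeasible s abar d v w (mv j i x) := by
          refine mv_feasible s abar d v w x hx j i (hBW hjB) (hBW hiB) (Ne.symm hij)
            (by omega) (by omega) ?_
          intro m _ _ him
          left
          obtain ⟨_, hism⟩ := Finset.mem_Ioc.mp him
          exact Finset.mem_Ioc.mpr ⟨by omega, by omega⟩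
        exact ⟨i, j, hiB, hjB, hij, hdef, hsur, hfx, mkobj hfu⟩
      · push_neg at hC
        obtain ⟨m, hm1, hm2, hjm, him, hns⟩ := hC
        obtain ⟨_, hjsm⟩ := Finset.mem_Ioc.mp hjm
        have hprem := hupfe.1 m hm1 hm2
        simp only [Nat.add_sub_cancel] at hprem
        have higt : s m < i := by
          by_contra hcon
          exact him (Finset.mem_Ioc.mpr ⟨hit, by omega⟩)
        have hv1m : s (v - 1) ≤ s m := le_of_lt (hsmono (by omega))
        have hsmw : s m ≤ s w := le_of_lt (hsmono hm2)
        have hstm : s t ≤ s m := le_of_lt (hsmono (by omega))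
        have hsplx : (∑ k ∈ Finset.Ioc (s (v - 1)) (s m), x k)
            + ∑ k ∈ Finset.Ioc (s m) (s w), x k
            = ∑ k ∈ Finset.Ioc (s (v - 1)) (s w), x k :=
          Finset.sum_Ioc_consecutive _ hv1m hsmw
        have hsplu : (∑ k ∈ Finset.Ioc (s t) (s m), xup k)
            + ∑ k ∈ Finset.Ioc (s m) (s w), xup k
            = ∑ k ∈ Finset.Ioc (s t) (s w), xup k :=
          Finset.sum_Ioc_consecutive _ hstm hsmw
        have htotx := hx.2.1
        have htotu := hupfe.2.1
        simp only [Nat.add_sub_cancel] at htotu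
        have hxle := hx.1 m (by omega) hm2
        obtain ⟨j', hj'F, hj'sur⟩ :=
          exists_flip (Finset.Ioc (s m) (s w)) x xup i
            (Finset.mem_Ioc.mpr ⟨higt, hisw⟩) hdef (by omega)
        obtain ⟨hj'm, hj'sw⟩ := Finset.mem_Ioc.mp hj'F
        have hj'B : j' ∈ Finset.Ioc (s t) (s w) := Finset.mem_Ioc.mpr ⟨by omega, hj'sw⟩
        exact ih i j' (by omega) hiB hj'B hdef hj'sur


lemma phiA (A B : Finset ℕ) (xdown xup x : ℕ → ℤ) (i j : ℕ)
    (hiA : i ∈ A) (hjA : j ∈ A) (hij : i ≠ j) (hiB : i ∉ B) (hjB : j ∉ B)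
    (hsur : xdown i < x i) (hdef : x j < xdown j) :
    ((∑ k ∈ A, max (mv i j x k - xdown k) 0) + ∑ k ∈ B, max (xup k - mv i j x k) 0)
      < (∑ k ∈ A, max (x k - xdown k) 0) + ∑ k ∈ B, max (xup k - x k) 0 := by
  have hB : ∑ k ∈ B, max (xup k - mv i j x k) 0 = ∑ k ∈ B, max (xup k - x k) 0 := by
    refine Finset.sum_congr rfl fun k hk => ?_
    rw [mv_apply_other (by rintro rfl; exact hiB hk) (by rintro rfl; exact hjB hk)]
  rw [hB, sum_pair hiA hjA hij (fun k => max (mv i j x k - xdown k) 0),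
    sum_pair hiA hjA hij (fun k => max (x k - xdown k) 0)]
  have hrest : ∑ k ∈ (A.erase i).erase j, max (mv i j x k - xdown k) 0
      = ∑ k ∈ (A.erase i).erase j, max (x k - xdown k) 0 := by
    refine Finset.sum_congr rfl fun k hk => ?_
    have hkj : k ≠ j := (Finset.mem_erase.mp hk).1
    have hki : k ≠ i := (Finset.mem_erase.mp (Finset.mem_erase.mp hk).2).1
    rw [mv_apply_other hki hkj]
  rw [hrest, mv_apply_i hij, mv_apply_j hij]
  omega

lemma phiB (A B : Finset ℕ) (xdown xup x : ℕ → ℤ) (i j : ℕ)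
    (hiB : i ∈ B) (hjB : j ∈ B) (hij : i ≠ j) (hiA : i ∉ A) (hjA : j ∉ A)
    (hdef : x i < xup i) (hsur : xup j < x j) :
    ((∑ k ∈ A, max (mv j i x k - xdown k) 0) + ∑ k ∈ B, max (xup k - mv j i x k) 0)
      < (∑ k ∈ A, max (x k - xdown k) 0) + ∑ k ∈ B, max (xup k - x k) 0 := by
  have hA : ∑ k ∈ A, max (mv j i x k - xdown k) 0 = ∑ k ∈ A, max (x k - xdown k) 0 := by
    refine Finset.sum_congr rfl fun k hk => ?_
    rw [mv_apply_other (by rintro rfl; exact hjA hk) (by rintro rfl; exact hiA hk)]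
  rw [hA, sum_pair hiB hjB hij (fun k => max (xup k - mv j i x k) 0),
    sum_pair hiB hjB hij (fun k => max (xup k - x k) 0)]
  have hrest : ∑ k ∈ (B.erase i).erase j, max (xup k - mv j i x k) 0
      = ∑ k ∈ (B.erase i).erase j, max (xup k - x k) 0 := by
    refine Finset.sum_congr rfl fun k hk => ?_
    have hkj : k ≠ j := (Finset.mem_erase.mp hk).1
    have hki : k ≠ i := (Finset.mem_erase.mp (Finset.mem_erase.mp hk).2).1
    rw [mv_apply_other hkj hki]
  rw [hrest, mv_apply_j (Ne.symm hij), mv_apply_i (Ne.symm hij)]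
  omega

lemma trunc_feasible (s : ℕ → ℕ) (hsmono : StrictMono s) (abar : ℕ → ℤ) (d : ℕ → ℤ)
    (v w : ℕ) (x : ℕ → ℤ) (hx : NestedFeasible s abar d v w x) :
    NestedFeasible s abar d v w
      (fun k => if k ∈ Finset.Ioc (s (v - 1)) (s w) then x k else 0) := by
  have hsub : ∀ m, m < w → Finset.Ioc (s (v - 1)) (s m) ⊆ Finset.Ioc (s (v - 1)) (s w) :=
    fun m hm => Finset.Ioc_subset_Ioc le_rfl (le_of_lt (hsmono hm))
  obtain ⟨hpre, htot, hbox⟩ := hx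
  refine ⟨?_, ?_, ?_⟩
  · intro m hm1 hm2
    have : ∑ k ∈ Finset.Ioc (s (v - 1)) (s m),
        (if k ∈ Finset.Ioc (s (v - 1)) (s w) then x k else 0)
        = ∑ k ∈ Finset.Ioc (s (v - 1)) (s m), x k :=
      Finset.sum_congr rfl fun k hk => if_pos (hsub m hm2 hk)
    rw [this]; exact hpre m hm1 hm2
  · have : ∑ k ∈ Finset.Ioc (s (v - 1)) (s w),
        (if k ∈ Finset.Ioc (s (v - 1)) (s w) then x k else 0)
        = ∑ k ∈ Finset.Ioc (s (v - 1)) (s w), x k :=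
      Finset.sum_congr rfl fun k hk => if_pos hk
    rw [this]; exact htot
  · intro k hk
    simp only []
    rw [if_pos hk]; exact hbox k hk

lemma trunc_obj (s : ℕ → ℕ) (f : ℕ → ℤ → ℝ) (v w : ℕ) (x : ℕ → ℤ) :
    NestedObj s f v w (fun k => if k ∈ Finset.Ioc (s (v - 1)) (s w) then x k else 0)
      = NestedObj s f v w x := by
  exact Finset.sum_congr rfl fun k hk => by simp only []; rw [if_pos hk]


end StmtAux

open StmtAux

theorem stmt3 (s : ℕ → ℕ) (hsmono : StrictMono s)
    (abar : ℕ → ℤ) (habar : Monotone abar)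
    (d : ℕ → ℤ) (hd : ∀ k, 0 < d k)
    (f : ℕ → ℤ → ℝ)
    (hconv : ∀ i x, 1 ≤ x → x + 1 ≤ d i → 2 * f i x ≤ f i (x - 1) + f i (x + 1))
    (v t w : ℕ) (hv : 1 ≤ v) (hvt : v ≤ t) (htw : t < w)
    (xdown xup : ℕ → ℤ)
    (hdown : NestedOptimal s abar d f v t xdown)
    (hup : NestedOptimal s abar d f (t + 1) w xup)
    (hfeas : ∃ x, NestedFeasible s abar d v w x) :
    ∃ xss : ℕ → ℤ, NestedOptimal s abar d f v w xss ∧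
      (∀ i ∈ Finset.Ioc (s (v - 1)) (s t), xss i ≤ xdown i) ∧
      (∀ i ∈ Finset.Ioc (s t) (s w), xup i ≤ xss i) := by
  classical
  have hstw : s t ≤ s w := le_of_lt (hsmono htw)
  have hat : s (v - 1) < s t := hsmono (by omega)
  have hAW : Finset.Ioc (s (v - 1)) (s t) ⊆ Finset.Ioc (s (v - 1)) (s w) :=
    Finset.Ioc_subset_Ioc le_rfl hstw
  have hBW : Finset.Ioc (s t) (s w) ⊆ Finset.Ioc (s (v - 1)) (s w) :=
    Finset.Ioc_subset_Ioc (le_of_lt hat) le_rfl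
  set S : Set (ℕ → ℤ) := {x | NestedFeasible s abar d v w x ∧
    ∀ k, k ∉ Finset.Ioc (s (v - 1)) (s w) → x k = 0} with hSdef
  have hSfin : S.Finite := by
    have hfin : (Set.pi Set.univ
        fun k : (Finset.Ioc (s (v - 1)) (s w) : Finset ℕ) => Set.Icc (0:ℤ) (d k)).Finite :=
      Set.Finite.pi fun k => Set.finite_Icc _ _
    refine Set.Finite.of_finite_image (f := fun x (k : (Finset.Ioc (s (v - 1)) (s w) : Finset ℕ)) => x k)
      (hfin.subset ?_) ?_
    · rintro _ ⟨x, hx, rfl⟩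
      intro k _
      exact ⟨(hx.1.2.2 k k.2).1, (hx.1.2.2 k k.2).2⟩
    · intro x hx y hy hxy
      funext k
      by_cases hk : k ∈ Finset.Ioc (s (v - 1)) (s w)
      · exact congrFun hxy ⟨k, hk⟩
      · rw [hx.2 k hk, hy.2 k hk]
  have hSne : S.Nonempty := by
    obtain ⟨x0, hx0⟩ := hfeas
    exact ⟨fun k => if k ∈ Finset.Ioc (s (v - 1)) (s w) then x0 k else 0,
      trunc_feasible s hsmono abar d v w x0 hx0, fun k hk => if_neg hk⟩
  obtain ⟨x1, hx1S, hx1min⟩ := Set.exists_min_image S (NestedObj s f v w) hSfin hSne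
  set T : Set (ℕ → ℤ) := {y | y ∈ S ∧ NestedObj s f v w y ≤ NestedObj s f v w x1} with hTdef
  have hTfin : T.Finite := hSfin.subset fun y hy => hy.1
  have hTne : T.Nonempty := ⟨x1, hx1S, le_rfl⟩
  set Phi : (ℕ → ℤ) → ℤ := fun y =>
    (∑ k ∈ Finset.Ioc (s (v - 1)) (s t), max (y k - xdown k) 0) +
      ∑ k ∈ Finset.Ioc (s t) (s w), max (xup k - y k) 0 with hPhidef
  obtain ⟨xss, hxssT, hxssmin⟩ := Set.exists_min_image T Phi hTfin hTne
  have hxssS : xss ∈ S := hxssT.1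
  have hxssfe : NestedFeasible s abar d v w xss := hxssS.1
  have hxssopt : NestedOptimal s abar d f v w xss := by
    refine ⟨hxssfe, fun y hy => ?_⟩
    have hy0 : (fun k => if k ∈ Finset.Ioc (s (v - 1)) (s w) then y k else 0) ∈ S :=
      ⟨trunc_feasible s hsmono abar d v w y hy, fun k hk => if_neg hk⟩
    calc NestedObj s f v w xss ≤ NestedObj s f v w x1 := hxssT.2
      _ ≤ _ := hx1min _ hy0
      _ = NestedObj s f v w y := trunc_obj s f v w y
  have hmemT : ∀ z, NestedFeasible s abar d v w z →
      (∀ k, k ∉ Finset.Ioc (s (v - 1)) (s w) → z k = 0) →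
      NestedObj s f v w z ≤ NestedObj s f v w xss → z ∈ T := by
    intro z hfz hsz hoz
    exact ⟨⟨hfz, hsz⟩, le_trans hoz hxssT.2⟩
  refine ⟨xss, hxssopt, ?_, ?_⟩
  · -- down part
    intro i hiA
    by_contra hcon
    push_neg at hcon
    have hsumle : ∑ k ∈ Finset.Ioc (s (v - 1)) (s t), xss k ≤ abar t - abar (v - 1) :=
      hxssfe.1 t hvt htw
    have hsumd : ∑ k ∈ Finset.Ioc (s (v - 1)) (s t), xdown k = abar t - abar (v - 1) :=
      hdown.1.2.1
    obtain ⟨j, hjA, hjdef⟩ := exists_flip (Finset.Ioc (s (v - 1)) (s t)) xdown xss i hiA hcon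
      (by omega)
    obtain ⟨i', j', hi'A, hj'A, hij', hsur', hdef', hfe', hoble'⟩ :=
      lemA s hsmono abar d f hconv v t w hv hvt htw xdown hdown xss hxssfe (i + j) i j
        le_rfl hiA hjA hcon hjdef
    have hyS : ∀ k, k ∉ Finset.Ioc (s (v - 1)) (s w) → mv i' j' xss k = 0 := by
      intro k hk
      rw [mv_apply_other (by rintro rfl; exact hk (hAW hi'A))
        (by rintro rfl; exact hk (hAW hj'A))]
      exact hxssS.2 k hk
    have hyT : mv i' j' xss ∈ T := hmemT _ hfe' hyS hoble'
    have hmin := hxssmin _ hyT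
    have hphi := phiA (Finset.Ioc (s (v - 1)) (s t)) (Finset.Ioc (s t) (s w))
      xdown xup xss i' j' hi'A hj'A hij'
      (by intro h; have h1 := (Finset.mem_Ioc.mp h).1; have h2 := (Finset.mem_Ioc.mp hi'A).2; omega)
      (by intro h; have h1 := (Finset.mem_Ioc.mp h).1; have h2 := (Finset.mem_Ioc.mp hj'A).2; omega)
      hsur' hdef'
    rw [hPhidef] at hmin
    simp only at hmin
    omega
  · -- up part
    intro i hiB
    by_contra hcon
    push_neg at hcon
    have hsplit : (∑ k ∈ Finset.Ioc (s (v - 1)) (s t), xss k)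
        + ∑ k ∈ Finset.Ioc (s t) (s w), xss k
        = ∑ k ∈ Finset.Ioc (s (v - 1)) (s w), xss k :=
      Finset.sum_Ioc_consecutive _ (le_of_lt hat) hstw
    have htotss := hxssfe.2.1
    have hAle : ∑ k ∈ Finset.Ioc (s (v - 1)) (s t), xss k ≤ abar t - abar (v - 1) :=
      hxssfe.1 t hvt htw
    have htotu := hup.1.2.1
    simp only [Nat.add_sub_cancel] at htotu
    obtain ⟨j, hjB, hjsur⟩ := exists_flip (Finset.Ioc (s t) (s w)) xss xup i hiB hcon
      (by omega)
    obtain ⟨i', j', hi'B, hj'B, hij', hdef', hsur', hfe', hoble'⟩ :=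
      lemB s hsmono abar d f hconv v t w hv hvt htw xup hup xss hxssfe
        ((s w - i) + (s w - j)) i j le_rfl hiB hjB hcon hjsur
    have hyS : ∀ k, k ∉ Finset.Ioc (s (v - 1)) (s w) → mv j' i' xss k = 0 := by
      intro k hk
      rw [mv_apply_other (by rintro rfl; exact hk (hBW hj'B))
        (by rintro rfl; exact hk (hBW hi'B))]
      exact hxssS.2 k hk
    have hyT : mv j' i' xss ∈ T := hmemT _ hfe' hyS hoble'
    have hmin := hxssmin _ hyT
    have hphi := phiB (Finset.Ioc (s (v - 1)) (s t)) (Finset.Ioc (s t) (s w))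
      xdown xup xss i' j' hi'B hj'B hij'
      (by intro h; have h1 := (Finset.mem_Ioc.mp h).2; have h2 := (Finset.mem_Ioc.mp hi'B).1; omega)
      (by intro h; have h1 := (Finset.mem_Ioc.mp h).2; have h2 := (Finset.mem_Ioc.mp hj'B).1; omega)
      hdef' hsur'
    rw [hPhidef] at hmin
    simp only at hmin
    omega
end

section
/- Suppose the NESTED(v,w) problem admits an optimal solution x** satisfying x**_i ≤ x↓_i for i ≤ s[t] and x**_i ≥ x↑_i for i > s[t], where x↓ and x↑ are feasible solutions of NESTED(v,t) and NESTED(t+1,w). Then any vector x with Σ_{i=s[v-1]+1}^{s[w]} x_i = ā_w − ā_{v-1}, x_i ≤ x↓_i for i ≤ s[t], x_i ≥ x↑_i for i > s[t], and 0 ≤ x_i ≤ d_i, automatically satisfies all nested constraints Σ_{k=s[v-1]+1}^{s[i]} x_k ≤ ā_i − ā_{v-1} for i = v,...,w−1. Consequently, any optimal solution of the box-constrained problem RAP(v,w) with lower bounds ĉ_i = 0 (i ≤ s[t]) or x↑_i (i > s[t]) and upper bounds d̂_i = x↓_i (i ≤ s[t]) or d_i (i > s[t]) is an optimal solution of NESTED(v,w).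 -/
/-- Feasibility for the continuous problem NESTED(v,w). -/
def NestedFeasibleR (s : ℕ → ℕ) (abar : ℕ → ℝ) (d : ℕ → ℝ) (v w : ℕ)
    (x : ℕ → ℝ) : Prop :=
  (∀ i, v ≤ i → i < w →
      ∑ k ∈ Finset.Ioc (s (v - 1)) (s i), x k ≤ abar i - abar (v - 1)) ∧
  (∑ k ∈ Finset.Ioc (s (v - 1)) (s w), x k = abar w - abar (v - 1)) ∧
  (∀ k ∈ Finset.Ioc (s (v - 1)) (s w), 0 ≤ x k ∧ x k ≤ d k)

/-- Objective of NESTED(v,w) and RAP(v,w). -/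
def NestedObjR (s : ℕ → ℕ) (f : ℕ → ℝ → ℝ) (v w : ℕ) (x : ℕ → ℝ) : ℝ :=
  ∑ i ∈ Finset.Ioc (s (v - 1)) (s w), f i (x i)

/-- Optimality for NESTED(v,w). -/
def NestedOptimalR (s : ℕ → ℕ) (abar : ℕ → ℝ) (d : ℕ → ℝ) (f : ℕ → ℝ → ℝ)
    (v w : ℕ) (x : ℕ → ℝ) : Prop :=
  NestedFeasibleR s abar d v w x ∧
  ∀ y, NestedFeasibleR s abar d v w y →
    NestedObjR s f v w x ≤ NestedObjR s f v w y

/-- Feasibility for RAP(v,w) with box bounds `c ≤ x ≤ dd`. -/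
def RapFeasibleR (s : ℕ → ℕ) (abar : ℕ → ℝ) (c dd : ℕ → ℝ) (v w : ℕ)
    (x : ℕ → ℝ) : Prop :=
  (∑ k ∈ Finset.Ioc (s (v - 1)) (s w), x k = abar w - abar (v - 1)) ∧
  (∀ k ∈ Finset.Ioc (s (v - 1)) (s w), c k ≤ x k ∧ x k ≤ dd k)

theorem stmt6 (s : ℕ → ℕ) (hsmono : StrictMono s)
    (abar : ℕ → ℝ) (habar : Monotone abar)
    (d : ℕ → ℝ) (hd : ∀ k, 0 < d k)
    (f : ℕ → ℝ → ℝ)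
    (v t w : ℕ) (hv : 1 ≤ v) (hvt : v ≤ t) (htw : t < w)
    (xdown xup : ℕ → ℝ)
    (hdown : NestedFeasibleR s abar d v t xdown)
    (hup : NestedFeasibleR s abar d (t + 1) w xup)
    (hstar : ∃ xss : ℕ → ℝ, NestedOptimalR s abar d f v w xss ∧
      (∀ i ∈ Finset.Ioc (s (v - 1)) (s t), xss i ≤ xdown i) ∧
      (∀ i ∈ Finset.Ioc (s t) (s w), xup i ≤ xss i))
    (c dd : ℕ → ℝ)
    (hc : ∀ i, c i = if i ≤ s t then 0 else xup i)
    (hdd : ∀ i, dd i = if i ≤ s t then xdown i else d i) :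
    (∀ x : ℕ → ℝ,
      (∑ k ∈ Finset.Ioc (s (v - 1)) (s w), x k = abar w - abar (v - 1)) →
      (∀ i ∈ Finset.Ioc (s (v - 1)) (s t), x i ≤ xdown i) →
      (∀ i ∈ Finset.Ioc (s t) (s w), xup i ≤ x i) →
      (∀ i ∈ Finset.Ioc (s (v - 1)) (s w), 0 ≤ x i ∧ x i ≤ d i) →
      ∀ i, v ≤ i → i < w →
        ∑ k ∈ Finset.Ioc (s (v - 1)) (s i), x k ≤ abar i - abar (v - 1)) ∧
    (∀ x : ℕ → ℝ,
      (RapFeasibleR s abar c dd v w x ∧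
        ∀ y, RapFeasibleR s abar c dd v w y →
          NestedObjR s f v w x ≤ NestedObjR s f v w y) →
      NestedOptimalR s abar d f v w x) := by

  obtain ⟨hdown1, hdown2, hdown3⟩ := hdown
  obtain ⟨hup1, hup2, hup3⟩ := hup
  simp only [Nat.add_sub_cancel] at hup1 hup2 hup3
  have hvt' : s (v - 1) ≤ s t := hsmono.monotone (by omega)
  have htw' : s t ≤ s w := hsmono.monotone htw.le
  have part1 : ∀ x : ℕ → ℝ,
      (∑ k ∈ Finset.Ioc (s (v - 1)) (s w), x k = abar w - abar (v - 1)) →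
      (∀ i ∈ Finset.Ioc (s (v - 1)) (s t), x i ≤ xdown i) →
      (∀ i ∈ Finset.Ioc (s t) (s w), xup i ≤ x i) →
      (∀ i ∈ Finset.Ioc (s (v - 1)) (s w), 0 ≤ x i ∧ x i ≤ d i) →
      ∀ i, v ≤ i → i < w →
        ∑ k ∈ Finset.Ioc (s (v - 1)) (s i), x k ≤ abar i - abar (v - 1) := by
    intro x hsum hle hge hbox i hvi hiw
    by_cases hit : i ≤ t
    · have hsub : Finset.Ioc (s (v-1)) (s i) ⊆ Finset.Ioc (s (v-1)) (s t) :=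
        Finset.Ioc_subset_Ioc_right (hsmono.monotone hit)
      calc ∑ k ∈ Finset.Ioc (s (v-1)) (s i), x k
          ≤ ∑ k ∈ Finset.Ioc (s (v-1)) (s i), xdown k :=
            Finset.sum_le_sum (fun k hk => hle k (hsub hk))
        _ ≤ abar i - abar (v-1) := by
            rcases lt_or_eq_of_le hit with h | h
            · exact hdown1 i hvi h
            · subst h; exact le_of_eq hdown2
    · push_neg at hit
      have hti : s t ≤ s i := hsmono.monotone hit.le
      have hiw' : s i ≤ s w := hsmono.monotone hiw.le
      have hsplit : ∑ k ∈ Finset.Ioc (s (v-1)) (s i), x k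
          + ∑ k ∈ Finset.Ioc (s i) (s w), x k = abar w - abar (v-1) := by
        rw [Finset.sum_Ioc_consecutive _ (hvt'.trans hti) hiw']; exact hsum
      have hub : ∑ k ∈ Finset.Ioc (s t) (s i), xup k ≤ abar i - abar t :=
        hup1 i (by omega) hiw
      have hsplit2 : ∑ k ∈ Finset.Ioc (s t) (s i), xup k
          + ∑ k ∈ Finset.Ioc (s i) (s w), xup k = abar w - abar t := by
        rw [Finset.sum_Ioc_consecutive _ hti hiw']; exact hup2
      have hge2 : ∑ k ∈ Finset.Ioc (s i) (s w), xup k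
          ≤ ∑ k ∈ Finset.Ioc (s i) (s w), x k :=
        Finset.sum_le_sum (fun k hk => hge k (Finset.Ioc_subset_Ioc_left hti hk))
      linarith
  refine ⟨part1, ?_⟩
  rintro x ⟨⟨hxsum, hxbox⟩, hxopt⟩
  obtain ⟨xss, ⟨⟨hss1, hss2, hss3⟩, hssopt⟩, hssdown, hssup⟩ := hstar
  have hle : ∀ i ∈ Finset.Ioc (s (v-1)) (s t), x i ≤ xdown i := by
    intro i hi
    have h2 := (hxbox i (Finset.Ioc_subset_Ioc_right htw' hi)).2
    rwa [hdd, if_pos (Finset.mem_Ioc.mp hi).2] at h2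
  have hge : ∀ i ∈ Finset.Ioc (s t) (s w), xup i ≤ x i := by
    intro i hi
    have h1 := (hxbox i (Finset.Ioc_subset_Ioc_left hvt' hi)).1
    rwa [hc, if_neg (Nat.not_le.mpr (Finset.mem_Ioc.mp hi).1)] at h1
  have hbox : ∀ i ∈ Finset.Ioc (s (v-1)) (s w), 0 ≤ x i ∧ x i ≤ d i := by
    intro i hi
    by_cases h : i ≤ s t
    · have h1 := (hxbox i hi).1; rw [hc, if_pos h] at h1
      have h2 := (hxbox i hi).2; rw [hdd, if_pos h] at h2
      have hi' : i ∈ Finset.Ioc (s (v-1)) (s t) :=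
        Finset.mem_Ioc.mpr ⟨(Finset.mem_Ioc.mp hi).1, h⟩
      exact ⟨h1, h2.trans (hdown3 i hi').2⟩
    · have h2 := (hxbox i hi).2; rw [hdd, if_neg h] at h2
      have hi' : i ∈ Finset.Ioc (s t) (s w) :=
        Finset.mem_Ioc.mpr ⟨Nat.not_le.mp h, (Finset.mem_Ioc.mp hi).2⟩
      exact ⟨(hup3 i hi').1.trans (hge i hi'), h2⟩
  refine ⟨⟨part1 x hxsum hle hge hbox, hxsum, hbox⟩, ?_⟩
  intro y hy
  have hssrap : RapFeasibleR s abar c dd v w xss := by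
    refine ⟨hss2, fun k hk => ?_⟩
    by_cases h : k ≤ s t
    · have hk' : k ∈ Finset.Ioc (s (v-1)) (s t) :=
        Finset.mem_Ioc.mpr ⟨(Finset.mem_Ioc.mp hk).1, h⟩
      rw [hc, hdd, if_pos h, if_pos h]
      exact ⟨(hss3 k hk).1, hssdown k hk'⟩
    · have hk' : k ∈ Finset.Ioc (s t) (s w) :=
        Finset.mem_Ioc.mpr ⟨Nat.not_le.mp h, (Finset.mem_Ioc.mp hk).2⟩
      rw [hc, hdd, if_neg h, if_neg h]
      exact ⟨hssup k hk', (hss3 k hk).2⟩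
  exact (hxopt xss hssrap).trans (hssopt y hy)
end

section
/- Let h : ℝ≥0 → ℝ be strictly convex and differentiable, γ_i > 0, f_i(x) = γ_i h(x/γ_i), Γ_i = Σ_{k=1}^i γ_k, and let Φ : [0, Γ_n] → [0, B] be the lower convex envelope (lower boundary of the convex hull) of the point set P = {(Γ_{s[j]}, a_j) : j = 0,...,m} with a_0 = 0, a_m = B. Then the vector defined by x_i = Φ(Γ_i) − Φ(Γ_{i-1}) satisfies: (i) x_i ≥ 0 for all i; (ii) Σ_{k=1}^{s[j]} x_k ≤ a_j for all j = 1,...,m−1; (iii) Σ_{k=1}^n x_k = B; and is an optimal solution of the continuous NESTED problem min Σ f_i(x_i) subject to these constraints (with d_i = +∞). -/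
/-- Abel summation for sums over `Icc 1 (k+1)`. -/
lemma stmt10_abel (L D : ℕ → ℝ) (k : ℕ) :
    ∑ i ∈ Finset.Icc 1 (k + 1), L i * (D i - D (i - 1))
      = L (k + 1) * D (k + 1) - L 1 * D 0
        + ∑ i ∈ Finset.Icc 1 k, (L i - L (i + 1)) * D i := by
  induction k with
  | zero => simp; ring
  | succ k ih =>
      rw [Finset.sum_Icc_succ_top (by omega : 1 ≤ k + 1 + 1), ih,
        Finset.sum_Icc_succ_top (by omega : 1 ≤ k + 1)]
      simp only [Nat.add_sub_cancel]
      ring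

set_option maxHeartbeats 2000000 in
theorem stmt10 (n m : ℕ) (hn : 1 ≤ n) (hm : 1 ≤ m)
    (s : ℕ → ℕ) (hs0 : s 0 = 0) (hsm : s m = n) (hsmono : StrictMono s)
    (γ : ℕ → ℝ) (hγ : ∀ i, 0 < γ i)
    (h : ℝ → ℝ) (hconv : StrictConvexOn ℝ (Set.Ici (0 : ℝ)) h)
    (hdiff : DifferentiableOn ℝ h (Set.Ici (0 : ℝ)))
    (f : ℕ → ℝ → ℝ) (hf : ∀ i x, f i x = γ i * h (x / γ i))
    (Γ : ℕ → ℝ) (hΓ : ∀ i, Γ i = ∑ k ∈ Finset.Icc 1 i, γ k)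
    (a : ℕ → ℝ) (B : ℝ) (ha0 : a 0 = 0) (haB : a m = B)
    (hamono : Monotone a) (hapos : ∀ j, 0 ≤ a j)
    (Φ : ℝ → ℝ)
    (hΦconv : ConvexOn ℝ (Set.Icc 0 (Γ n)) Φ)
    (hΦ0 : Φ 0 = 0) (hΦn : Φ (Γ n) = B)
    (hΦbelow : ∀ j ≤ m, Φ (Γ (s j)) ≤ a j)
    (hΦmax : ∀ Ψ : ℝ → ℝ, ConvexOn ℝ (Set.Icc 0 (Γ n)) Ψ →
      (∀ j ≤ m, Ψ (Γ (s j)) ≤ a j) → ∀ z ∈ Set.Icc 0 (Γ n), Ψ z ≤ Φ z)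
    (x : ℕ → ℝ) (hx : ∀ i, x i = Φ (Γ i) - Φ (Γ (i - 1))) :
    (∀ i, 1 ≤ i → i ≤ n → 0 ≤ x i) ∧
    (∀ j, 1 ≤ j → j < m → ∑ k ∈ Finset.Icc 1 (s j), x k ≤ a j) ∧
    (∑ k ∈ Finset.Icc 1 n, x k = B) ∧
    (∀ y : ℕ → ℝ, (∀ i ∈ Finset.Icc 1 n, 0 ≤ y i) →
      (∀ j, 1 ≤ j → j < m → ∑ k ∈ Finset.Icc 1 (s j), y k ≤ a j) →
      (∑ k ∈ Finset.Icc 1 n, y k = B) →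
      ∑ i ∈ Finset.Icc 1 n, f i (x i) ≤ ∑ i ∈ Finset.Icc 1 n, f i (y i)) := by
  -- basic facts about Γ
  have hΓ0 : Γ 0 = 0 := by simp [hΓ]
  have hΓstep : ∀ i : ℕ, Γ (i + 1) = Γ i + γ (i + 1) := by
    intro i
    rw [hΓ, hΓ, Finset.sum_Icc_succ_top (by omega : 1 ≤ i + 1)]
  have hΓmono : StrictMono Γ := by
    apply strictMono_nat_of_lt_succ
    intro i
    have := hγ (i + 1)
    rw [hΓstep]; linarith
  have hΓnn : ∀ i, 0 ≤ Γ i := by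
    intro i
    have := hΓmono.monotone (Nat.zero_le i)
    rw [hΓ0] at this; exact this
  have hmem : ∀ i, i ≤ n → Γ i ∈ Set.Icc (0 : ℝ) (Γ n) :=
    fun i hi => ⟨hΓnn i, hΓmono.monotone hi⟩
  -- Φ is nonnegative on [0, Γ n]
  have hΦnn : ∀ z ∈ Set.Icc (0 : ℝ) (Γ n), 0 ≤ Φ z := by
    intro z hz
    have hΨ : ConvexOn ℝ (Set.Icc (0 : ℝ) (Γ n)) (Φ ⊔ (fun _ => (0 : ℝ))) :=
      hΦconv.sup (convexOn_const 0 (convex_Icc _ _))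
    have := hΦmax _ hΨ (fun j hj => max_le (hΦbelow j hj) (hapos j)) z hz
    exact le_trans (le_max_right _ _) this
  -- Φ is monotone on [0, Γ n]
  have hΦmono : ∀ u v : ℝ, u ∈ Set.Icc (0 : ℝ) (Γ n) → v ∈ Set.Icc (0 : ℝ) (Γ n) →
      u ≤ v → Φ u ≤ Φ v := by
    intro u v hu hv huv
    rcases eq_or_lt_of_le huv with rfl | huv
    · exact le_refl _
    · have hv0 : 0 < v := lt_of_le_of_lt hu.1 huv
      have hb0 : 0 ≤ u / v := div_nonneg hu.1 hv0.le
      have hb1 : u / v ≤ 1 := by rw [div_le_one hv0]; exact huv.le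
      have h0m : (0 : ℝ) ∈ Set.Icc (0 : ℝ) (Γ n) := ⟨le_refl _, hΓnn n⟩
      have hbv : u / v * v = u := div_mul_cancel₀ u hv0.ne'
      have key := hΦconv.2 h0m hv (by linarith : (0:ℝ) ≤ 1 - u / v) hb0 (by ring)
      simp only [smul_eq_mul, mul_zero, zero_add, hbv, hΦ0, add_zero] at key
      nlinarith [hΦnn v hv, key, mul_nonneg (by linarith : (0:ℝ) ≤ 1 - u / v) (hΦnn v hv)]
  -- nonnegativity of x
  have hxnn : ∀ i, 1 ≤ i → i ≤ n → 0 ≤ x i := by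
    intro i h1 h2
    rw [hx]
    have hle : Γ (i - 1) ≤ Γ i := hΓmono.monotone (Nat.sub_le i 1)
    have := hΦmono _ _ (hmem (i - 1) (le_trans (Nat.sub_le i 1) h2)) (hmem i h2) hle
    linarith
  -- partial sums of x
  have hX : ∀ i : ℕ, ∑ k ∈ Finset.Icc 1 i, x k = Φ (Γ i) := by
    intro i
    induction i with
    | zero => simp [hΓ0, hΦ0]
    | succ i ih =>
        rw [Finset.sum_Icc_succ_top (by omega : 1 ≤ i + 1), ih, hx]
        simp only [Nat.add_sub_cancel]
        ring
  refine ⟨hxnn, ?_, ?_, ?_⟩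
  · intro j h1 h2
    rw [hX]
    exact hΦbelow j (le_of_lt h2)
  · rw [hX, hΦn]
  -- ============ optimality ============
  intro y hy1 hy2 hy3
  obtain ⟨n', hn'⟩ : ∃ n', n = n' + 1 := ⟨n - 1, by omega⟩
  subst hn'
  set σ : ℕ → ℝ := fun i => x i / γ i with hσdef
  set lam : ℕ → ℝ := fun i => derivWithin h (Set.Ici 0) (σ i) with hlamdef
  have hxσ : ∀ i, x i = σ i * γ i := fun i => (div_mul_cancel₀ (x i) (hγ i).ne').symm
  have hσnn : ∀ i, 1 ≤ i → i ≤ n' + 1 → 0 ≤ σ i :=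
    fun i h1 h2 => div_nonneg (hxnn i h1 h2) (hγ i).le
  -- the slopes are monotone
  have hσmono : ∀ i, 1 ≤ i → i + 1 ≤ n' + 1 → σ i ≤ σ (i + 1) := by
    intro i h1 h2
    obtain ⟨i', rfl⟩ : ∃ i', i = i' + 1 := ⟨i - 1, by omega⟩
    have hγ1 : Γ (i' + 1) - Γ i' = γ (i' + 1) := by rw [hΓstep]; ring
    have hγ2 : Γ (i' + 2) - Γ (i' + 1) = γ (i' + 2) := by rw [hΓstep (i' + 1)]; ring
    have hlt1 : Γ i' < Γ (i' + 1) := hΓmono (by omega)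
    have hlt2 : Γ (i' + 1) < Γ (i' + 2) := hΓmono (by omega)
    have key := hΦconv.slope_mono_adjacent (hmem i' (by omega)) (hmem (i' + 2) (by omega)) hlt1 hlt2
    have e1 : Φ (Γ (i' + 1)) - Φ (Γ i') = x (i' + 1) := by rw [hx]; simp
    have e2 : Φ (Γ (i' + 2)) - Φ (Γ (i' + 1)) = x (i' + 2) := by rw [hx]; simp
    rw [e1, e2, hγ1, hγ2] at key
    exact key
  -- monotonicity of the multipliers
  have hlammono : ∀ i, 1 ≤ i → i + 1 ≤ n' + 1 → lam i ≤ lam (i + 1) := by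
    intro i h1 h2
    exact (hconv.convexOn.monotoneOn_derivWithin hdiff)
      (Set.mem_Ici.mpr (hσnn i h1 (by omega))) (Set.mem_Ici.mpr (hσnn (i + 1) (by omega) h2))
      (hσmono i h1 h2)
  -- gradient inequality for convex differentiable h
  have hgrad : ∀ u v : ℝ, 0 ≤ u → 0 ≤ v →
      derivWithin h (Set.Ici 0) u * (v - u) ≤ h v - h u := by
    intro u v hu hv
    rcases lt_trichotomy u v with huv | rfl | hvu
    · have hsl := hconv.convexOn.derivWithin_le_slope (Set.mem_Ici.mpr hu)
        (Set.mem_Ici.mpr hv) huv (hdiff u (Set.mem_Ici.mpr hu))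
      rw [slope_def_field] at hsl
      have h0 : 0 < v - u := by linarith
      exact (le_div_iff₀ h0).mp hsl
    · simp
    · have hsl := hconv.convexOn.slope_le_derivWithin (Set.mem_Ici.mpr hv)
        (Set.mem_Ici.mpr hu) hvu (hdiff u (Set.mem_Ici.mpr hu))
      rw [slope_def_field] at hsl
      have h0 : 0 < u - v := by linarith
      have := (div_le_iff₀ h0).mp hsl
      nlinarith [this]
  -- kink lemma: a strict increase of slope forces a tight constraint
  have hkink : ∀ i, 1 ≤ i → i + 1 ≤ n' + 1 → σ i < σ (i + 1) →
      ∃ j, 1 ≤ j ∧ j < m ∧ s j = i ∧ a j ≤ Φ (Γ i) := by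
    intro i h1 h2 hσlt
    by_contra hcontra
    push_neg at hcontra
    have hcon' : ∀ j ≤ m, s j = i → Φ (Γ i) < a j := by
      intro j hj hji
      rcases Nat.eq_zero_or_pos j with rfl | hj0
      · rw [hs0] at hji; omega
      rcases eq_or_lt_of_le hj with rfl | hjm
      · rw [hsm] at hji; omega
      exact hcontra j hj0 hjm hji
    obtain ⟨i', rfl⟩ : ∃ i', i = i' + 1 := ⟨i - 1, by omega⟩
    have hσlt' : σ (i' + 1) < σ (i' + 2) := hσlt
    set δ : ℝ := (σ (i' + 2) - σ (i' + 1)) / 2 with hδdef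
    have hδ0 : 0 < δ := by rw [hδdef]; linarith
    set sl : ℝ := σ (i' + 1) + δ with hsldef
    have hsl1 : 0 ≤ sl - σ (i' + 1) := by rw [hsldef]; linarith
    have hsl2 : 0 ≤ σ (i' + 2) - sl := by rw [hsldef, hδdef]; linarith
    obtain ⟨ε, hε0, hεa, hεb, hεc⟩ :
        ∃ ε : ℝ, 0 < ε ∧ ε ≤ δ * γ (i' + 1) ∧ ε ≤ δ * γ (i' + 2) ∧
          ∀ j ≤ m, s j = i' + 1 → Φ (Γ (i' + 1)) + ε ≤ a j := by
      by_cases hex : ∃ j, j ≤ m ∧ s j = i' + 1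
      · obtain ⟨j0, hj0m, hj0⟩ := hex
        have hgap0 : 0 < a j0 - Φ (Γ (i' + 1)) := by
          have := hcon' j0 hj0m hj0; linarith
        refine ⟨min (min (δ * γ (i' + 1)) (δ * γ (i' + 2))) (a j0 - Φ (Γ (i' + 1))),
          lt_min (lt_min (mul_pos hδ0 (hγ _)) (mul_pos hδ0 (hγ _))) hgap0,
          le_trans (min_le_left _ _) (min_le_left _ _),
          le_trans (min_le_left _ _) (min_le_right _ _), ?_⟩
        intro j hj hji
        have hjj : j = j0 := hsmono.injective (by rw [hj0, hji])
        subst hjj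
        have := min_le_right (min (δ * γ (i' + 1)) (δ * γ (i' + 2))) (a j - Φ (Γ (i' + 1)))
        linarith
      · refine ⟨min (δ * γ (i' + 1)) (δ * γ (i' + 2)),
          lt_min (mul_pos hδ0 (hγ _)) (mul_pos hδ0 (hγ _)),
          min_le_left _ _, min_le_right _ _, ?_⟩
        intro j hj hji
        exact absurd ⟨j, hj, hji⟩ hex
    set c : ℝ := Φ (Γ (i' + 1)) + ε with hcdef
    set L : ℝ → ℝ := fun z => c + sl * (z - Γ (i' + 1)) with hLdef
    have hLconv : ConvexOn ℝ (Set.Icc (0 : ℝ) (Γ (n' + 1))) L := by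
      refine ⟨convex_Icc _ _, ?_⟩
      intro p _ q _ ap bp hap hbp hab
      have hb : bp = 1 - ap := by linarith
      subst hb
      simp only [hLdef, smul_eq_mul]
      exact le_of_eq (by ring)
    have hγ1 : Γ (i' + 1) - Γ i' = γ (i' + 1) := by rw [hΓstep]; ring
    have hγ2 : Γ (i' + 2) - Γ (i' + 1) = γ (i' + 2) := by rw [hΓstep (i' + 1)]; ring
    have hxeq1 : Φ (Γ (i' + 1)) - Φ (Γ i') = σ (i' + 1) * γ (i' + 1) := by
      rw [← hxσ (i' + 1), hx (i' + 1)]; simp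
    have hxeq2 : Φ (Γ (i' + 2)) - Φ (Γ (i' + 1)) = σ (i' + 2) * γ (i' + 2) := by
      rw [← hxσ (i' + 2), hx (i' + 2)]; simp
    -- L lies below Φ to the left of Γ i'
    have hleft : ∀ z ∈ Set.Icc (0 : ℝ) (Γ (n' + 1)), z ≤ Γ i' → L z ≤ Φ z := by
      intro z hz hzle
      have hL1 : L (Γ i') ≤ Φ (Γ i') := by
        simp only [hLdef]
        have e1 : sl * (Γ i' - Γ (i' + 1)) = -(sl * γ (i' + 1)) := by
          rw [show Γ i' - Γ (i' + 1) = -γ (i' + 1) from by linarith]; ring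
        rw [e1]
        have e2 : sl * γ (i' + 1) = σ (i' + 1) * γ (i' + 1) + δ * γ (i' + 1) := by
          rw [hsldef]; ring
        rw [e2, hcdef]
        linarith [hxeq1, hεa]
      rcases eq_or_lt_of_le hzle with rfl | hzlt
      · exact hL1
      · have key := hΦconv.slope_mono_adjacent hz (hmem (i' + 1) (by omega)) hzlt
          (hΓmono (by omega : i' < i' + 1))
        have hgap : 0 < Γ i' - z := by linarith
        have hrhs : (Φ (Γ (i' + 1)) - Φ (Γ i')) / (Γ (i' + 1) - Γ i') = σ (i' + 1) := by
          rw [hxeq1, hγ1, mul_div_cancel_right₀ _ (hγ (i' + 1)).ne']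
        rw [hrhs] at key
        have key2 : Φ (Γ i') - Φ z ≤ σ (i' + 1) * (Γ i' - z) := (div_le_iff₀ hgap).mp key
        simp only [hLdef] at hL1 ⊢
        nlinarith [hL1, key2, mul_nonneg hsl1 hgap.le]
    -- L lies below Φ to the right of Γ (i'+2)
    have hright : ∀ z ∈ Set.Icc (0 : ℝ) (Γ (n' + 1)), Γ (i' + 2) ≤ z → L z ≤ Φ z := by
      intro z hz hzle
      have hL2 : L (Γ (i' + 2)) ≤ Φ (Γ (i' + 2)) := by
        simp only [hLdef]
        rw [show Γ (i' + 2) - Γ (i' + 1) = γ (i' + 2) from hγ2]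
        have e2 : sl * γ (i' + 2) = σ (i' + 2) * γ (i' + 2) - (σ (i' + 2) - sl) * γ (i' + 2) := by
          ring
        rw [e2, hcdef]
        have e3 : δ * γ (i' + 2) ≤ (σ (i' + 2) - sl) * γ (i' + 2) := by
          have : δ = σ (i' + 2) - sl := by rw [hsldef, hδdef]; ring
          rw [← this]
        linarith [hxeq2, hεb, e3]
      rcases eq_or_lt_of_le hzle with rfl | hzlt
      · exact hL2
      · have key := hΦconv.slope_mono_adjacent (hmem (i' + 1) (by omega)) hz
          (hΓmono (by omega : i' + 1 < i' + 2)) hzlt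
        have hgap : 0 < z - Γ (i' + 2) := by linarith
        have hrhs : (Φ (Γ (i' + 2)) - Φ (Γ (i' + 1))) / (Γ (i' + 2) - Γ (i' + 1)) = σ (i' + 2) := by
          rw [hxeq2, hγ2, mul_div_cancel_right₀ _ (hγ (i' + 2)).ne']
        rw [hrhs] at key
        have key2 : σ (i' + 2) * (z - Γ (i' + 2)) ≤ Φ z - Φ (Γ (i' + 2)) :=
          (le_div_iff₀ hgap).mp key
        simp only [hLdef] at hL2 ⊢
        nlinarith [hL2, key2, mul_nonneg hsl2 hgap.le]
    -- the improved function Φ ⊔ L contradicts maximality of Φ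
    have hΨconv : ConvexOn ℝ (Set.Icc (0 : ℝ) (Γ (n' + 1))) (Φ ⊔ L) := hΦconv.sup hLconv
    have hΨbelow : ∀ j ≤ m, (Φ ⊔ L) (Γ (s j)) ≤ a j := by
      intro j hj
      have hsjn : s j ≤ n' + 1 := by
        have := hsmono.monotone hj
        omega
      refine sup_le (hΦbelow j hj) ?_
      rcases lt_trichotomy (s j) (i' + 1) with hlt | heq | hgt
      · have hle : s j ≤ i' := by omega
        exact le_trans (hleft (Γ (s j)) (hmem _ hsjn) (hΓmono.monotone hle)) (hΦbelow j hj)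
      · have hε := hεc j hj heq
        simp only [hLdef, heq, sub_self, mul_zero, add_zero, hcdef]
        linarith
      · have hle : i' + 2 ≤ s j := by omega
        exact le_trans (hright (Γ (s j)) (hmem _ hsjn) (hΓmono.monotone hle)) (hΦbelow j hj)
    have hfin := hΦmax (Φ ⊔ L) hΨconv hΨbelow (Γ (i' + 1)) (hmem (i' + 1) (by omega))
    have hLval : L (Γ (i' + 1)) = c := by simp [hLdef]
    have : L (Γ (i' + 1)) ≤ (Φ ⊔ L) (Γ (i' + 1)) := le_sup_right
    rw [hLval] at this
    rw [hcdef] at this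
    linarith
  -- gradient step: pointwise lower bound on f i (y i)
  have hstep : ∀ i ∈ Finset.Icc 1 (n' + 1), f i (x i) + lam i * (y i - x i) ≤ f i (y i) := by
    intro i hi
    simp only [Finset.mem_Icc] at hi
    have hyi0 : 0 ≤ y i := hy1 i (by simp only [Finset.mem_Icc]; omega)
    have hyi : 0 ≤ y i / γ i := div_nonneg hyi0 (hγ i).le
    have hg0 := hgrad (σ i) (y i / γ i) (hσnn i hi.1 hi.2) hyi
    have hg := mul_le_mul_of_nonneg_left hg0 (hγ i).le
    rw [hf, hf]
    have hxi : x i / γ i = σ i := rfl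
    rw [hxi]
    have e : γ i * (derivWithin h (Set.Ici 0) (σ i) * (y i / γ i - σ i)) = lam i * (y i - x i) := by
      rw [hxσ i, hlamdef]
      have e' : y i / γ i - σ i = (y i - σ i * γ i) / γ i := by
        rw [sub_div, mul_div_cancel_right₀ _ (hγ i).ne']
      rw [e', mul_comm (γ i), mul_assoc, div_mul_cancel₀ _ (hγ i).ne']
    rw [e] at hg
    nlinarith [hg]
  have hsum1 : ∑ i ∈ Finset.Icc 1 (n' + 1), (f i (x i) + lam i * (y i - x i)) ≤
      ∑ i ∈ Finset.Icc 1 (n' + 1), f i (y i) := Finset.sum_le_sum hstep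
  rw [Finset.sum_add_distrib] at hsum1
  -- Abel summation
  set D : ℕ → ℝ := fun i => (∑ k ∈ Finset.Icc 1 i, y k) - Φ (Γ i) with hDdef
  have hyd : ∀ i ∈ Finset.Icc 1 (n' + 1), lam i * (y i - x i) = lam i * (D i - D (i - 1)) := by
    intro i hi
    simp only [Finset.mem_Icc] at hi
    obtain ⟨i', rfl⟩ : ∃ i', i = i' + 1 := ⟨i - 1, by omega⟩
    have e : D (i' + 1) - D (i' + 1 - 1) = y (i' + 1) - x (i' + 1) := by
      simp only [hDdef, Nat.add_sub_cancel]
      rw [Finset.sum_Icc_succ_top (by omega : 1 ≤ i' + 1), hx (i' + 1)]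
      simp only [Nat.add_sub_cancel]
      ring
    rw [e]
  have hsum2 : 0 ≤ ∑ i ∈ Finset.Icc 1 (n' + 1), lam i * (y i - x i) := by
    rw [Finset.sum_congr rfl hyd, stmt10_abel lam D n']
    have hD0 : D 0 = 0 := by simp [hDdef, hΓ0, hΦ0]
    have hDn : D (n' + 1) = 0 := by simp [hDdef, hy3, hΦn]
    rw [hD0, hDn]
    simp only [mul_zero, sub_zero, zero_add]
    apply Finset.sum_nonneg
    intro i hi
    simp only [Finset.mem_Icc] at hi
    have h2 : i + 1 ≤ n' + 1 := by omega
    have hlamle := hlammono i hi.1 h2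
    rcases eq_or_lt_of_le hlamle with heq | hlt
    · rw [heq]; simp
    · have hσl : σ i < σ (i + 1) := by
        rcases eq_or_lt_of_le (hσmono i hi.1 h2) with he | hl
        · exfalso
          have : lam i = lam (i + 1) := by simp only [hlamdef]; rw [he]
          rw [this] at hlt
          exact lt_irrefl _ hlt
        · exact hl
      obtain ⟨j, hj1, hjm, hji, hja⟩ := hkink i hi.1 h2 hσl
      have hDi : D i ≤ 0 := by
        have hYa : ∑ k ∈ Finset.Icc 1 (s j), y k ≤ a j := hy2 j hj1 hjm
        rw [hji] at hYa
        simp only [hDdef]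
        linarith
      nlinarith [mul_nonneg (neg_nonneg.2 (sub_nonpos.2 hlamle)) (neg_nonneg.2 hDi)]
  linarith
end

section
/- Let A ≥ 0 be an integer and consider the greedy algorithm for min Σ_{i=1}^n f_i(x_i) subject to Σ x_i = A, 0 ≤ x_i ≤ d_i with integer variables and convex f_i: starting from x = 0, repeatedly increment by one unit the variable i maximizing feasibility with smallest marginal cost f_i(x_i+1) − f_i(x_i). Then after k steps (0 ≤ k ≤ A) the current vector is an optimal solution of the same problem with total sum k. In particular, the greedy algorithm produces a chain of optimal solutions x^(0) ≤ x^(1) ≤ ... ≤ x^(A) (componentwise monotone) where x^(k) is optimal for total resource k. -/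
lemma sum_update_comp {n : ℕ} {M : Type*} [AddCommGroup M]
    (f : Fin n → ℤ → M) (g : Fin n → ℤ) (i : Fin n) (b : ℤ) :
    ∑ l, f l (Function.update g i b l) = ∑ l, f l (g l) - f i (g i) + f i b := by
  have h1 : ∀ l ∈ Finset.univ \ {i}, f l (Function.update g i b l) = f l (g l) := by
    intro l hl
    have : l ≠ i := by simpa using (Finset.mem_sdiff.mp hl).2
    rw [Function.update_of_ne this]
  rw [Finset.sum_eq_sum_sdiff_singleton_add (Finset.mem_univ i)
        (fun l => f l (Function.update g i b l)),
      Finset.sum_eq_sum_sdiff_singleton_add (Finset.mem_univ i) (fun l => f l (g l)),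
      Finset.sum_congr rfl h1, Function.update_self]
  abel

lemma sum_update_int {n : ℕ} (g : Fin n → ℤ) (i : Fin n) (b : ℤ) :
    ∑ l, Function.update g i b l = ∑ l, g l - g i + b := by
  simpa using sum_update_comp (fun _ (x : ℤ) => x) g i b

theorem stmt12 (n : ℕ) (d : Fin n → ℤ) (hd : ∀ i, 0 ≤ d i)
    (f : Fin n → ℤ → ℝ)
    (hconv : ∀ i, ∀ x y : ℤ, 0 ≤ x → x ≤ y → y + 1 ≤ d i →
      f i (x + 1) - f i x ≤ f i (y + 1) - f i y)
    (A : ℤ) (hA0 : 0 ≤ A) (hAd : A ≤ ∑ i, d i)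
    (X : ℕ → Fin n → ℤ) (hX0 : ∀ i, X 0 i = 0)
    (hstep : ∀ k : ℕ, (k : ℤ) < A → ∃ i : Fin n, X k i < d i ∧
      (∀ j : Fin n, X k j < d j →
        f i (X k i + 1) - f i (X k i) ≤ f j (X k j + 1) - f j (X k j)) ∧
      X (k + 1) = Function.update (X k) i (X k i + 1)) :
    ∀ k : ℕ, (k : ℤ) ≤ A →
      ((∑ i, X k i = (k : ℤ)) ∧ (∀ i, 0 ≤ X k i ∧ X k i ≤ d i)) ∧
      (∀ y : Fin n → ℤ, (∑ i, y i = (k : ℤ)) → (∀ i, 0 ≤ y i ∧ y i ≤ d i) →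
        ∑ i, f i (X k i) ≤ ∑ i, f i (y i)) ∧
      ((k : ℤ) < A → ∀ i, X k i ≤ X (k + 1) i) := by
  suffices H : ∀ k : ℕ, (k : ℤ) ≤ A →
      ((∑ i, X k i = (k : ℤ)) ∧ (∀ i, 0 ≤ X k i ∧ X k i ≤ d i)) ∧
      (∀ y : Fin n → ℤ, (∑ i, y i = (k : ℤ)) → (∀ i, 0 ≤ y i ∧ y i ≤ d i) →
        ∑ i, f i (X k i) ≤ ∑ i, f i (y i)) by
    intro k hk
    refine ⟨(H k hk).1, (H k hk).2, ?_⟩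
    intro hkA i
    obtain ⟨j, _, _, heq⟩ := hstep k hkA
    rw [heq]
    rcases eq_or_ne i j with rfl | hij
    · simp
    · rw [Function.update_of_ne hij]
  intro k
  induction k with
  | zero =>
    intro _
    constructor
    · constructor
      · simp [hX0]
      · intro i; rw [hX0]; exact ⟨le_refl 0, hd i⟩
    · intro y hy hyb
      have hy0 : ∀ i ∈ Finset.univ, y i = 0 := by
        rw [← Finset.sum_eq_zero_iff_of_nonneg (fun i _ => (hyb i).1)]
        simpa using hy
      apply le_of_eq
      apply Finset.sum_congr rfl
      intro i hi
      rw [hX0, hy0 i hi]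
  | succ k ih =>
    intro hk1
    have hkA : (k : ℤ) < A := by push_cast at hk1 ⊢; linarith
    obtain ⟨⟨hsum, hbnd⟩, hopt⟩ := ih (le_of_lt hkA)
    obtain ⟨i, hi, hgreedy, heq⟩ := hstep k hkA
    have hcast : ((k + 1 : ℕ) : ℤ) = (k : ℤ) + 1 := by push_cast; ring
    constructor
    · constructor
      · rw [heq, sum_update_int, hsum, hcast]; ring
      · intro j
        rw [heq]
        rcases eq_or_ne j i with rfl | hji
        · rw [Function.update_self]
          exact ⟨by linarith [(hbnd j).1], by linarith⟩
        · rw [Function.update_of_ne hji]; exact hbnd j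
    · intro y hy hyb
      -- find j with X k j < y j
      have hexj : ∃ j, X k j < y j := by
        by_contra hcon
        push_neg at hcon
        have : ∑ l, y l ≤ ∑ l, X k l := Finset.sum_le_sum (fun l _ => hcon l)
        rw [hy, hsum, hcast] at this
        linarith
      obtain ⟨j, hj⟩ := hexj
      have hyj1 : 1 ≤ y j := by linarith [(hbnd j).1]
      have hjd : X k j < d j := by linarith [(hyb j).2]
      -- y' = y with one unit removed at j is feasible for total k
      set y' := Function.update y j (y j - 1) with hy'
      have hy'sum : ∑ l, y' l = (k : ℤ) := by
        rw [hy', sum_update_int, hy, hcast]; ring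
      have hy'bnd : ∀ l, 0 ≤ y' l ∧ y' l ≤ d l := by
        intro l
        rw [hy']
        rcases eq_or_ne l j with rfl | hlj
        · rw [Function.update_self]
          exact ⟨by linarith, by linarith [(hyb l).2]⟩
        · rw [Function.update_of_ne hlj]; exact hyb l
      have h1 : ∑ l, f l (X k l) ≤ ∑ l, f l (y' l) := hopt y' hy'sum hy'bnd
      have h2 : ∑ l, f l (y' l) = ∑ l, f l (y l) - f j (y j) + f j (y j - 1) := by
        rw [hy']; exact sum_update_comp f y j (y j - 1)
      have h3 : ∑ l, f l (X (k + 1) l)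
          = ∑ l, f l (X k l) - f i (X k i) + f i (X k i + 1) := by
        rw [heq]; exact sum_update_comp f (X k) i (X k i + 1)
      -- marginal comparisons
      have hm1 : f i (X k i + 1) - f i (X k i) ≤ f j (X k j + 1) - f j (X k j) :=
        hgreedy j hjd
      have hm2 : f j (X k j + 1) - f j (X k j) ≤ f j (y j) - f j (y j - 1) := by
        have := hconv j (X k j) (y j - 1) (hbnd j).1 (by linarith) (by linarith [(hyb j).2])
        simpa using this
      linarith
end

section
/- Let f_i : {0,...,d_i} → ℝ be convex (nondecreasing marginal costs) and suppose x and y are both optimal integer solutions of min Σ f_i(x_i) subject to Σ x_i = A, 0 ≤ x_i ≤ d_i, for totals A_x ≤ A_y respectively. Then there exists an optimal solution z for total A_x with z ≤ y componentwise. -/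
open Finset

private lemma split_sum {n : ℕ} {M : Type*} [AddCommMonoid M] {i j : Fin n} (hij : i ≠ j)
    (u : Fin n → M) :
    ∑ t, u t = (∑ t ∈ univ \ {i, j}, u t) + (u i + u j) := by
  rw [← Finset.sum_pair hij, Finset.sum_sdiff (Finset.subset_univ _)]

private lemma aux13 (n : ℕ) (d : Fin n → ℤ) (f : Fin n → ℤ → ℝ)
    (hconv : ∀ i, ∀ a b : ℤ, 0 ≤ a → a ≤ b → b + 1 ≤ d i →
      f i (a + 1) - f i a ≤ f i (b + 1) - f i b)
    (Ax Ay : ℤ) (hAxy : Ax ≤ Ay) (y : Fin n → ℤ)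
    (hysum : ∑ i, y i = Ay) (hybox : ∀ i, 0 ≤ y i ∧ y i ≤ d i)
    (hyopt : ∀ z : Fin n → ℤ, (∑ i, z i = Ay) → (∀ i, 0 ≤ z i ∧ z i ≤ d i) →
      ∑ i, f i (y i) ≤ ∑ i, f i (z i)) :
    ∀ k : ℕ, ∀ x : Fin n → ℤ, (∑ i, x i = Ax) → (∀ i, 0 ≤ x i ∧ x i ≤ d i) →
      (∀ z : Fin n → ℤ, (∑ i, z i = Ax) → (∀ i, 0 ≤ z i ∧ z i ≤ d i) →
        ∑ i, f i (x i) ≤ ∑ i, f i (z i)) →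
      (∑ i, max (x i - y i) 0 ≤ (k : ℤ)) →
      ∃ z : Fin n → ℤ, (∑ i, z i = Ax) ∧ (∀ i, 0 ≤ z i ∧ z i ≤ d i) ∧
        (∀ i, z i ≤ y i) ∧
        (∀ w : Fin n → ℤ, (∑ i, w i = Ax) → (∀ i, 0 ≤ w i ∧ w i ≤ d i) →
          ∑ i, f i (z i) ≤ ∑ i, f i (w i)) := by
  intro k
  induction k with
  | zero =>
    intro x hxsum hxbox hxopt hpot
    refine ⟨x, hxsum, hxbox, ?_, hxopt⟩
    intro i
    have h0 : ∀ t ∈ univ, (0:ℤ) ≤ max (x t - y t) 0 := fun t _ => le_max_right _ _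
    have hall := (Finset.sum_eq_zero_iff_of_nonneg h0).mp
      (le_antisymm (by simpa using hpot) (Finset.sum_nonneg h0))
    have hi := hall i (mem_univ i)
    by_contra h
    push_neg at h
    rw [max_eq_left (by omega)] at hi
    omega
  | succ k ih =>
    intro x hxsum hxbox hxopt hpot
    by_cases hle : ∀ i, x i ≤ y i
    · exact ⟨x, hxsum, hxbox, hle, hxopt⟩
    push_neg at hle
    obtain ⟨i, hi⟩ := hle
    have hj : ∃ j, x j < y j := by
      by_contra h
      push_neg at h
      have h1 : Ay ≤ Ax := by
        rw [← hxsum, ← hysum]; exact Finset.sum_le_sum (fun t _ => h t)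
      have hsum0 : ∑ t, (x t - y t) = 0 := by
        rw [Finset.sum_sub_distrib, hxsum, hysum]; omega
      have := (Finset.sum_eq_zero_iff_of_nonneg
        (fun t _ => sub_nonneg.mpr (h t))).mp hsum0 i (mem_univ i)
      omega
    obtain ⟨j, hj⟩ := hj
    have hij : i ≠ j := by intro h; subst h; omega
    have hxbi := hxbox i; have hxbj := hxbox j
    have hybi := hybox i; have hybj := hybox j
    classical
    set x' : Fin n → ℤ := Function.update (Function.update x i (x i - 1)) j (x j + 1)
      with hx'def
    have hx'i : x' i = x i - 1 := by
      rw [hx'def, Function.update_of_ne hij, Function.update_self]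
    have hx'j : x' j = x j + 1 := by
      rw [hx'def, Function.update_self]
    have hx'o : ∀ t, t ≠ i → t ≠ j → x' t = x t := fun t hti htj => by
      rw [hx'def, Function.update_of_ne htj, Function.update_of_ne hti]
    set y' : Fin n → ℤ := Function.update (Function.update y i (y i + 1)) j (y j - 1)
      with hy'def
    have hy'i : y' i = y i + 1 := by
      rw [hy'def, Function.update_of_ne hij, Function.update_self]
    have hy'j : y' j = y j - 1 := by
      rw [hy'def, Function.update_self]
    have hy'o : ∀ t, t ≠ i → t ≠ j → y' t = y t := fun t hti htj => by
      rw [hy'def, Function.update_of_ne htj, Function.update_of_ne hti]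
    have hmem : ∀ t ∈ univ \ ({i, j} : Finset (Fin n)), t ≠ i ∧ t ≠ j := by
      intro t ht
      simp only [mem_sdiff, mem_insert, mem_singleton, mem_univ, true_and] at ht
      push_neg at ht
      exact ht
    have hsubx : ∑ t ∈ univ \ {i, j}, x' t = ∑ t ∈ univ \ {i, j}, x t :=
      Finset.sum_congr rfl (fun t ht => hx'o t (hmem t ht).1 (hmem t ht).2)
    have hsuby : ∑ t ∈ univ \ {i, j}, y' t = ∑ t ∈ univ \ {i, j}, y t :=
      Finset.sum_congr rfl (fun t ht => hy'o t (hmem t ht).1 (hmem t ht).2)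
    have hsubfx : ∑ t ∈ univ \ {i, j}, f t (x' t) = ∑ t ∈ univ \ {i, j}, f t (x t) :=
      Finset.sum_congr rfl (fun t ht => by rw [hx'o t (hmem t ht).1 (hmem t ht).2])
    have hsubfy : ∑ t ∈ univ \ {i, j}, f t (y' t) = ∑ t ∈ univ \ {i, j}, f t (y t) :=
      Finset.sum_congr rfl (fun t ht => by rw [hy'o t (hmem t ht).1 (hmem t ht).2])
    -- feasibility of x'
    have hx'sum : ∑ t, x' t = Ax := by
      have h2 : ∑ t, x' t = ∑ t, x t := by
        rw [split_sum hij x', split_sum hij x, hsubx, hx'i, hx'j]; ring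
      rw [h2]; exact hxsum
    have hx'box : ∀ t, 0 ≤ x' t ∧ x' t ≤ d t := by
      intro t
      by_cases hti : t = i
      · subst hti; rw [hx'i]; omega
      by_cases htj : t = j
      · subst htj; rw [hx'j]; omega
      · rw [hx'o t hti htj]; exact hxbox t
    -- feasibility of y'
    have hy'sum : ∑ t, y' t = Ay := by
      have h2 : ∑ t, y' t = ∑ t, y t := by
        rw [split_sum hij y', split_sum hij y, hsuby, hy'i, hy'j]; ring
      rw [h2]; exact hysum
    have hy'box : ∀ t, 0 ≤ y' t ∧ y' t ≤ d t := by
      intro t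
      by_cases hti : t = i
      · subst hti; rw [hy'i]; omega
      by_cases htj : t = j
      · subst htj; rw [hy'j]; omega
      · rw [hy'o t hti htj]; exact hybox t
    -- convexity inequalities
    have hconvj := hconv j (x j) (y j - 1) hxbj.1 (by omega) (by omega)
    have hconvi := hconv i (y i) (x i - 1) hybi.1 (by omega) (by omega)
    have hyj1 : y j - 1 + 1 = y j := by ring
    have hxi1 : x i - 1 + 1 = x i := by ring
    rw [hyj1] at hconvj
    rw [hxi1] at hconvi
    -- y optimality inequality
    have hykey : f i (y i) + f j (y j) ≤ f i (y i + 1) + f j (y j - 1) := by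
      have h1 := hyopt y' hy'sum hy'box
      rw [split_sum hij (fun t => f t (y' t)), split_sum hij (fun t => f t (y t))] at h1
      rw [hsubfy, hy'i, hy'j] at h1
      linarith
    -- cost of x' ≤ cost of x
    have hcost : ∑ t, f t (x' t) ≤ ∑ t, f t (x t) := by
      rw [split_sum hij (fun t => f t (x' t)), split_sum hij (fun t => f t (x t))]
      rw [hsubfx, hx'i, hx'j]
      linarith
    have hx'opt : ∀ w : Fin n → ℤ, (∑ t, w t = Ax) → (∀ t, 0 ≤ w t ∧ w t ≤ d t) →
        ∑ t, f t (x' t) ≤ ∑ t, f t (w t) :=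
      fun w hw hwb => le_trans hcost (hxopt w hw hwb)
    -- potential decreases
    have hpot' : ∑ t, max (x' t - y t) 0 ≤ (k : ℤ) := by
      have hsubp : ∑ t ∈ univ \ {i, j}, max (x' t - y t) 0
          = ∑ t ∈ univ \ {i, j}, max (x t - y t) 0 :=
        Finset.sum_congr rfl (fun t ht => by rw [hx'o t (hmem t ht).1 (hmem t ht).2])
      have hnew : ∑ t, max (x' t - y t) 0 = (∑ t, max (x t - y t) 0) - 1 := by
        rw [split_sum hij (fun t => max (x' t - y t) 0),
          split_sum hij (fun t => max (x t - y t) 0)]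
        rw [hsubp, hx'i, hx'j]
        have e1 : max (x i - 1 - y i) 0 = x i - 1 - y i := max_eq_left (by omega)
        have e2 : max (x i - y i) 0 = x i - y i := max_eq_left (by omega)
        have e3 : max (x j + 1 - y j) 0 = 0 := max_eq_right (by omega)
        have e4 : max (x j - y j) 0 = 0 := max_eq_right (by omega)
        rw [e1, e2, e3, e4]
        ring
      rw [hnew]
      push_cast at hpot
      omega
    exact ih x' hx'sum hx'box hx'opt hpot'

theorem stmt13 (n : ℕ) (d : Fin n → ℤ) (hd : ∀ i, 0 ≤ d i)
    (f : Fin n → ℤ → ℝ)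
    (hconv : ∀ i, ∀ a b : ℤ, 0 ≤ a → a ≤ b → b + 1 ≤ d i →
      f i (a + 1) - f i a ≤ f i (b + 1) - f i b)
    (Ax Ay : ℤ) (hAxy : Ax ≤ Ay) (x y : Fin n → ℤ)
    (hxsum : ∑ i, x i = Ax) (hxbox : ∀ i, 0 ≤ x i ∧ x i ≤ d i)
    (hxopt : ∀ z : Fin n → ℤ, (∑ i, z i = Ax) → (∀ i, 0 ≤ z i ∧ z i ≤ d i) →
      ∑ i, f i (x i) ≤ ∑ i, f i (z i))
    (hysum : ∑ i, y i = Ay) (hybox : ∀ i, 0 ≤ y i ∧ y i ≤ d i)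
    (hyopt : ∀ z : Fin n → ℤ, (∑ i, z i = Ay) → (∀ i, 0 ≤ z i ∧ z i ≤ d i) →
      ∑ i, f i (y i) ≤ ∑ i, f i (z i)) :
    ∃ z : Fin n → ℤ, (∑ i, z i = Ax) ∧ (∀ i, 0 ≤ z i ∧ z i ≤ d i) ∧
      (∀ i, z i ≤ y i) ∧
      (∀ w : Fin n → ℤ, (∑ i, w i = Ax) → (∀ i, 0 ≤ w i ∧ w i ≤ d i) →
        ∑ i, f i (z i) ≤ ∑ i, f i (w i)) := by
  have hnn : 0 ≤ ∑ i, max (x i - y i) 0 :=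
    Finset.sum_nonneg (fun t _ => le_max_right _ _)
  exact aux13 n d f hconv Ax Ay hAxy y hysum hybox hyopt
    (∑ i, max (x i - y i) 0).toNat x hxsum hxbox hxopt
    (by rw [Int.toNat_of_nonneg hnn])
end

section
/- Suppose the NESTED problem is solved recursively: for v = w it is a RAP, and for v < w with t = ⌊(v+w)/2⌋ the recursion solves NESTED(v,t), NESTED(t+1,w), then one RAP(v,w) on s[w] − s[v-1] variables. If one RAP on q variables with total resource R costs at most K·q·log(R/q) elementary operations (plus a constant K'), then the total cost of solving NESTED(1,m) on n variables with total resource B is at most K''·n·(1 + ⌈log₂ m⌉)·(1 + log(B/n)) for some constant K'' depending only on K, K'. -/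
private lemma gibbs14 (q1 q2 R1 R2 : ℝ) (h1 : 0 < q1) (h2 : 0 < q2) (hR1 : 0 ≤ R1) (hR2 : 0 ≤ R2) :
    q1 * Real.log ((R1 + q1) / q1) + q2 * Real.log ((R2 + q2) / q2) ≤
      (q1 + q2) * Real.log ((R1 + R2 + (q1 + q2)) / (q1 + q2)) := by
  have hq : 0 < q1 + q2 := by linarith
  have hx : (R1 + q1) / q1 ∈ Set.Ioi (0:ℝ) := by
    simp only [Set.mem_Ioi]; positivity
  have hy : (R2 + q2) / q2 ∈ Set.Ioi (0:ℝ) := by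
    simp only [Set.mem_Ioi]; positivity
  have ha : (0:ℝ) ≤ q1 / (q1 + q2) := by positivity
  have hb : (0:ℝ) ≤ q2 / (q1 + q2) := by positivity
  have hab : q1 / (q1 + q2) + q2 / (q1 + q2) = 1 := by field_simp
  have hcc := strictConcaveOn_log_Ioi.concaveOn.2 hx hy ha hb hab
  simp only [smul_eq_mul] at hcc
  have key : q1 / (q1 + q2) * ((R1 + q1) / q1) + q2 / (q1 + q2) * ((R2 + q2) / q2)
      = (R1 + R2 + (q1 + q2)) / (q1 + q2) := by field_simp; ring
  rw [key] at hcc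
  have hmul := mul_le_mul_of_nonneg_left hcc hq.le
  calc q1 * Real.log ((R1 + q1) / q1) + q2 * Real.log ((R2 + q2) / q2)
      = (q1 + q2) * (q1 / (q1 + q2) * Real.log ((R1 + q1) / q1)
          + q2 / (q1 + q2) * Real.log ((R2 + q2) / q2)) := by field_simp
    _ ≤ (q1 + q2) * Real.log ((R1 + R2 + (q1 + q2)) / (q1 + q2)) := hmul

private noncomputable def phi14 (s : ℕ → ℕ) (a : ℕ → ℝ) (v w : ℕ) : ℝ :=
  ((s w : ℝ) - (s (v-1) : ℝ)) *
    Real.log ((a w - a (v-1) + ((s w : ℝ) - (s (v-1) : ℝ))) / ((s w : ℝ) - (s (v-1) : ℝ)))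

set_option maxHeartbeats 1000000 in
theorem stmt14 (K K' : ℝ) (hK : 0 ≤ K) (hK' : 0 ≤ K') :
    ∃ K'' : ℝ, ∀ (m n : ℕ) (s : ℕ → ℕ) (a : ℕ → ℝ) (B : ℝ) (C : ℕ → ℕ → ℝ),
      1 ≤ m → 1 ≤ n → s 0 = 0 → s m = n → StrictMono s →
      a 0 = 0 → a m = B → Monotone a → (n : ℝ) ≤ B →
      (∀ v w, 0 ≤ C v w) →
      (∀ v, 1 ≤ v → v ≤ m →
        C v v ≤ K * ((s v : ℝ) - (s (v - 1) : ℝ)) *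
            Real.log ((a v - a (v - 1)) / ((s v : ℝ) - (s (v - 1) : ℝ))) + K') →
      (∀ v w, 1 ≤ v → v < w → w ≤ m →
        C v w ≤ C v ((v + w) / 2) + C ((v + w) / 2 + 1) w +
          K * ((s w : ℝ) - (s (v - 1) : ℝ)) *
            Real.log ((a w - a (v - 1)) / ((s w : ℝ) - (s (v - 1) : ℝ))) + K') →
      C 1 m ≤ K'' * n * (1 + (Nat.clog 2 m : ℝ)) * (1 + Real.log (B / n)) := by
  refine ⟨K + 2 * K', ?_⟩
  intro m n s a B C hm hn hs0 hsm hsmono ha0 ham hamono hnB hC0 hbase hrec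
  have hn' : (0:ℝ) < n := by exact_mod_cast hn
  have hBn : (1:ℝ) ≤ B / n := (one_le_div hn').mpr hnB
  have hlogBn : 0 ≤ Real.log (B / n) := Real.log_nonneg hBn
  -- basic facts
  have hq1 : ∀ v w, 1 ≤ v → v ≤ w → (1:ℝ) ≤ (s w : ℝ) - (s (v-1) : ℝ) := by
    intro v w hv hvw
    have h1 : s (v-1) < s w := hsmono (by omega)
    have h2 : s (v-1) + 1 ≤ s w := h1
    have h3 : ((s (v-1) : ℝ)) + 1 ≤ (s w : ℝ) := by exact_mod_cast h2
    linarith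
  have hR0 : ∀ v w, 1 ≤ v → v ≤ w → 0 ≤ a w - a (v-1) := by
    intro v w hv hvw
    have := hamono (show v - 1 ≤ w by omega); linarith
  have hphi0 : ∀ v w, 1 ≤ v → v ≤ w → 0 ≤ phi14 s a v w := by
    intro v w hv hvw
    have hq := hq1 v w hv hvw
    have hR := hR0 v w hv hvw
    unfold phi14
    have : (1:ℝ) ≤ (a w - a (v-1) + ((s w : ℝ) - (s (v-1) : ℝ))) / ((s w : ℝ) - (s (v-1) : ℝ)) := by
      rw [le_div_iff₀ (by linarith)]; linarith
    have := Real.log_nonneg this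
    nlinarith
  have hcost : ∀ v w, 1 ≤ v → v ≤ w →
      K * ((s w : ℝ) - (s (v - 1) : ℝ)) *
          Real.log ((a w - a (v - 1)) / ((s w : ℝ) - (s (v - 1) : ℝ))) ≤ K * phi14 s a v w := by
    intro v w hv hvw
    have hq := hq1 v w hv hvw
    have hR := hR0 v w hv hvw
    have hqpos : (0:ℝ) < (s w : ℝ) - (s (v-1) : ℝ) := by linarith
    have hlog : Real.log ((a w - a (v - 1)) / ((s w : ℝ) - (s (v - 1) : ℝ))) ≤
        Real.log ((a w - a (v-1) + ((s w : ℝ) - (s (v-1) : ℝ))) / ((s w : ℝ) - (s (v-1) : ℝ))) := by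
      rcases eq_or_lt_of_le hR with h | h
      · rw [← h]
        simp only [zero_div, Real.log_zero]
        apply Real.log_nonneg
        rw [le_div_iff₀ hqpos]; linarith
      · apply Real.log_le_log (by positivity)
        rw [div_le_div_iff_of_pos_right hqpos]
        linarith
    unfold phi14
    rw [mul_assoc]
    apply mul_le_mul_of_nonneg_left ?_ hK
    exact mul_le_mul_of_nonneg_left hlog (by linarith)
  -- main induction
  have key : ∀ d : ℕ, ∀ v w, 1 ≤ v → v ≤ w → w ≤ m → w - v = d →
      C v w ≤ K * (1 + (Nat.clog 2 (w - v + 1) : ℝ)) * phi14 s a v w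
        + K' * (2 * ((w - v + 1 : ℕ) : ℝ) - 1) := by
    intro d
    induction d using Nat.strong_induction_on with
    | _ d ih =>
      intro v w hv hvw hw hd
      rcases eq_or_lt_of_le hvw with rfl | hlt
      · -- base case w = v
        have hb := hbase v hv hw
        have hc := hcost v v hv le_rfl
        simp only [Nat.sub_self, Nat.clog_one_right, zero_add]
        push_cast
        have hphp := hphi0 v v hv le_rfl
        nlinarith
      · -- recursive case
        set t := (v + w) / 2 with ht
        have hvt : v ≤ t := by omega
        have htw : t < w := by omega
        have h1 := ih (t - v) (by omega) v t hv hvt (by omega) rfl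
        have h2 := ih (w - (t+1)) (by omega) (t+1) w (by omega) (by omega) hw rfl
        -- clog facts
        have hcl : Nat.clog 2 (w - v + 1) = Nat.clog 2 ((w - v + 1 + 1) / 2) + 1 :=
          Nat.clog_of_two_le one_lt_two (by omega)
        have hc1 : Nat.clog 2 (t - v + 1) + 1 ≤ Nat.clog 2 (w - v + 1) := by
          rw [hcl]
          exact Nat.add_le_add_right (Nat.clog_mono_right _ (by omega)) 1
        have hc2 : Nat.clog 2 (w - (t+1) + 1) + 1 ≤ Nat.clog 2 (w - v + 1) := by
          rw [hcl]
          exact Nat.add_le_add_right (Nat.clog_mono_right _ (by omega)) 1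
        -- gibbs
        have hQ1 : (0:ℝ) < (s t : ℝ) - (s (v-1) : ℝ) := by linarith [hq1 v t hv hvt]
        have hQ2 : (0:ℝ) < (s w : ℝ) - (s t : ℝ) := by
          have := hsmono htw
          have : ((s t : ℝ)) < (s w : ℝ) := by exact_mod_cast this
          linarith
        have hR1' : (0:ℝ) ≤ a t - a (v-1) := hR0 v t hv hvt
        have hR2' : (0:ℝ) ≤ a w - a t := by
          have := hamono htw.le; linarith
        have hgib := gibbs14 _ _ _ _ hQ1 hQ2 hR1' hR2'
        have e1 : ((s t:ℝ) - (s (v-1):ℝ)) + ((s w:ℝ) - (s t:ℝ)) = (s w:ℝ) - (s (v-1):ℝ) := by ring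
        have e2 : (a t - a (v-1)) + (a w - a t) = a w - a (v-1) := by ring
        rw [e1, e2] at hgib
        have hg : phi14 s a v t + phi14 s a (t+1) w ≤ phi14 s a v w := by
          unfold phi14
          simp only [Nat.add_sub_cancel]
          exact hgib
        -- combine
        have hrecv := hrec v w hv hlt hw
        rw [← ht] at hrecv
        have hcst := hcost v w hv hvw
        have hL1 : ((Nat.clog 2 (t - v + 1) : ℕ) : ℝ) + 1 ≤ (Nat.clog 2 (w - v + 1) : ℝ) := by
          exact_mod_cast hc1
        have hL2 : ((Nat.clog 2 (w - (t+1) + 1) : ℕ) : ℝ) + 1 ≤ (Nat.clog 2 (w - v + 1) : ℝ) := by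
          exact_mod_cast hc2
        have hcnt : ((t - v + 1 : ℕ) : ℝ) + ((w - (t+1) + 1 : ℕ) : ℝ) = ((w - v + 1 : ℕ) : ℝ) := by
          have : (t - v + 1) + (w - (t+1) + 1) = w - v + 1 := by omega
          exact_mod_cast this
        have hp1 := hphi0 v t hv hvt
        have hp2 := hphi0 (t+1) w (by omega) (by omega)
        have hp := hphi0 v w hv hvw
        set L : ℝ := (Nat.clog 2 (w - v + 1) : ℝ) with hLdef
        have hL0 : (1:ℝ) ≤ L := by
          have := Nat.cast_nonneg (α := ℝ) (Nat.clog 2 (t - v + 1))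
          linarith
        have e3 : K * (1 + (Nat.clog 2 (t - v + 1) : ℝ)) * phi14 s a v t ≤ K * L * phi14 s a v t := by
          apply mul_le_mul_of_nonneg_right ?_ hp1
          apply mul_le_mul_of_nonneg_left ?_ hK
          linarith
        have e4 : K * (1 + (Nat.clog 2 (w - (t+1) + 1) : ℝ)) * phi14 s a (t+1) w ≤
            K * L * phi14 s a (t+1) w := by
          apply mul_le_mul_of_nonneg_right ?_ hp2
          apply mul_le_mul_of_nonneg_left ?_ hK
          linarith
        have e5 : K * L * phi14 s a v t + K * L * phi14 s a (t+1) w ≤ K * L * phi14 s a v w := by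
          have hKL : 0 ≤ K * L := by positivity
          calc K * L * phi14 s a v t + K * L * phi14 s a (t+1) w
              = K * L * (phi14 s a v t + phi14 s a (t+1) w) := by ring
            _ ≤ K * L * phi14 s a v w := mul_le_mul_of_nonneg_left hg hKL
        have goalEq : K * (1 + L) * phi14 s a v w = K * L * phi14 s a v w + K * phi14 s a v w := by
          ring
        have hcnt' : K' * (((t - v + 1 : ℕ) : ℝ) + ((w - (t+1) + 1 : ℕ) : ℝ)) = K' * ((w - v + 1 : ℕ) : ℝ) := by
          rw [hcnt]
        linarith
  -- conclude
  have hfin := key (m - 1) 1 m le_rfl hm le_rfl (by omega)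
  have hm1 : m - 1 + 1 = m := by omega
  rw [hm1] at hfin
  have hphim : phi14 s a 1 m = (n : ℝ) * Real.log ((B + n) / n) := by
    unfold phi14
    simp [hs0, hsm, ha0, ham]
  have hmn : (m : ℝ) ≤ (n : ℝ) := by
    have h1 : m ≤ s m := hsmono.le_apply
    have : m ≤ n := hsm ▸ h1
    exact_mod_cast this
  have hBpos : (0:ℝ) < B := lt_of_lt_of_le hn' hnB
  have hlogle : Real.log ((B + n) / n) ≤ 1 + Real.log (B / n) := by
    have h2 : (B + n) / n ≤ 2 * (B / n) := by
      rw [div_le_iff₀ hn']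
      have : (2 : ℝ) * (B / n) * n = 2 * B := by field_simp
      rw [this]; linarith
    have h3 : Real.log ((B + n) / n) ≤ Real.log (2 * (B / n)) := by
      apply Real.log_le_log (div_pos (by linarith) hn') h2
    have h4 : Real.log (2 * (B / n)) = Real.log 2 + Real.log (B / n) := by
      rw [Real.log_mul (by norm_num) (ne_of_gt (div_pos hBpos hn'))]
    have h5 : Real.log 2 ≤ 1 := by
      nlinarith [Real.log_le_sub_one_of_pos (show (0:ℝ) < 2 by norm_num)]
    linarith
  have hphile : phi14 s a 1 m ≤ (n : ℝ) * (1 + Real.log (B / n)) := by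
    rw [hphim]
    exact mul_le_mul_of_nonneg_left hlogle (by positivity)
  set L : ℝ := (Nat.clog 2 m : ℝ) with hL
  have hL0 : (0:ℝ) ≤ L := Nat.cast_nonneg _
  have hD1 : (1:ℝ) ≤ 1 + Real.log (B / n) := by linarith
  have hphip := hphi0 1 m le_rfl hm
  have step1 : K * (1 + L) * phi14 s a 1 m ≤ K * (1 + L) * ((n:ℝ) * (1 + Real.log (B / n))) := by
    exact mul_le_mul_of_nonneg_left hphile (mul_nonneg hK (by linarith))
  have step2 : K' * (2 * (m : ℝ) - 1) ≤ 2 * K' * (n : ℝ) * ((1 + L) * (1 + Real.log (B / n))) := by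
    have hLD : (1:ℝ) ≤ (1 + L) * (1 + Real.log (B / n)) := by nlinarith
    have h6 : K' * (2 * (m : ℝ) - 1) ≤ K' * (2 * (n : ℝ)) := by
      apply mul_le_mul_of_nonneg_left ?_ hK'
      linarith
    have h7 : K' * (2 * (n : ℝ)) ≤ 2 * K' * (n : ℝ) * ((1 + L) * (1 + Real.log (B / n))) := by
      nlinarith [mul_nonneg hK' hn'.le]
    linarith
  calc C 1 m ≤ K * (1 + L) * phi14 s a 1 m + K' * (2 * (m : ℝ) - 1) := hfin
    _ ≤ K * (1 + L) * ((n:ℝ) * (1 + Real.log (B / n)))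
        + 2 * K' * (n : ℝ) * ((1 + L) * (1 + Real.log (B / n))) := by linarith
    _ = (K + 2 * K') * n * (1 + L) * (1 + Real.log (B / n)) := by ring
end
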